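/- arXiv:1002.3520 — 8 statements merged into one kernel-verified Lean document; each statement's English description precedes it below -/
import Mathlib

section
/- Let n = 2m+1 and let E be a subset of {1,...,2n} of cardinality n. Define E^⊥ = (2n+1-E)^c (complement taken in {1,...,2n}). Let σ_E be the permutation of {1,...,2n} sending {1,...,n} to the elements of E in increasing order and {n+1,...,2n} to the elements of E^c in increasing order, and let σ'_E be the permutation sending {1,...,n} to the elements of 2n+1-E in decreasing order and {n+1,...,2n} to the elements of E^⊥ in increasing order. Then sgn(σ'_E) = (-1)^{m+1} · sgn(σ_E). -/
/-!
Write ρ for the reversal j ↦ 2n+1-j and τ for the permutation fixing {1,…,n} and reversing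
{n+1,…,2n}. A permutation that is increasing on each half is determined by the image of the
first half, so comparing halves gives σ'_E = ρ ∘ σ_E ∘ τ: on the first half ρ ∘ σ'_E
enumerates E increasingly, and on the second half ρ ∘ σ_E ∘ τ enumerates ρ(E^c) = E^⊥
increasingly.
The reversal of k points is a product of ⌊k/2⌋ disjoint transpositions, so
sgn ρ = (-1)^n = -1 and sgn τ = (-1)^m.
-/

open Equiv Equiv.Perm

theorem Fin.sign_revPerm (k : ℕ) :
    sign (Fin.revPerm : Perm (Fin k)) = (-1) ^ (k / 2) := by
  induction k with
  | zero => rfl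
  | succ k ih =>
    -- rotate `i ↦ i + 1`, then reverse the last `k` points
    have hrev : (Fin.revPerm : Perm (Fin (k + 1))) =
        decomposeFin.symm (0, Fin.revPerm) * finRotate (k + 1) := by
      ext i
      rcases Fin.eq_castSucc_or_eq_last i with ⟨i, rfl⟩ | rfl
      · simp [Fin.val_rev]
        omega
      · simp
    rw [hrev, map_mul, decomposeFin.symm_sign, ih, sign_finRotate, if_pos rfl, one_mul,
      ← pow_add, Int.units_pow_eq_pow_mod_two, eq_comm, Int.units_pow_eq_pow_mod_two]
    simp only [Nat.add_sub_cancel]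
    congr 1
    rcases Nat.even_or_odd' k with ⟨j, rfl | rfl⟩ <;> omega

theorem Fin.mem_image_rev {k : ℕ} {s : Finset (Fin k)} {x : Fin k} :
    x ∈ s.image Fin.rev ↔ x.rev ∈ s := by
  rw [Finset.mem_image]
  exact ⟨by rintro ⟨a, ha, rfl⟩; simpa, fun h => ⟨x.rev, h, Fin.rev_rev x⟩⟩

theorem Finset.eq_of_strictMono_of_mem {α : Type*} [LinearOrder α] {s : Finset α} {k : ℕ}
    (h : s.card = k) {f g : Fin k → α} (hfs : ∀ i, f i ∈ s) (hgs : ∀ i, g i ∈ s)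
    (hf : StrictMono f) (hg : StrictMono g) : f = g :=
  (orderEmbOfFin_unique h hfs hf).trans (orderEmbOfFin_unique h hgs hg).symm

section Halves

variable {n : ℕ}

def finHalves (n : ℕ) : Fin n ⊕ Fin n ≃ Fin (2 * n) :=
  finSumFinEquiv.trans (finCongr (two_mul n).symm)

@[simp] theorem val_finHalves_inl (i : Fin n) : (finHalves n (.inl i) : ℕ) = i := by
  simp [finHalves]

@[simp] theorem val_finHalves_inr (i : Fin n) : (finHalves n (.inr i) : ℕ) = n + i := by
  simp [finHalves, Nat.add_comm]

theorem strictMono_comp_finHalves_inl {α : Type*} [Preorder α] {f : Fin (2 * n) → α}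
    (hf : ∀ j k : Fin (2 * n), (j : ℕ) < n → (k : ℕ) < n → j < k → f j < f k) :
    StrictMono fun i => f (finHalves n (.inl i)) :=
  fun i k hik => hf _ _ (by simp) (by simp) (by rw [Fin.lt_def] at hik ⊢; simpa using hik)

theorem strictMono_comp_finHalves_inr {α : Type*} [Preorder α] {f : Fin (2 * n) → α}
    (hf : ∀ j k : Fin (2 * n), n ≤ (j : ℕ) → n ≤ (k : ℕ) → j < k → f j < f k) :
    StrictMono fun i => f (finHalves n (.inr i)) :=
  fun i k hik => hf _ _ (by simp) (by simp) (by rw [Fin.lt_def] at hik ⊢; simpa using hik)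

def revSecondHalf (n : ℕ) : Perm (Fin (2 * n)) :=
  (finHalves n).permCongr (Perm.sumCongr 1 Fin.revPerm)

theorem sign_revSecondHalf : sign (revSecondHalf n) = (-1) ^ (n / 2) := by
  simp [revSecondHalf, sign_permCongr, sign_sumCongr, Fin.sign_revPerm]

end Halves

theorem eq_revPerm_mul_mul_revSecondHalf {n : ℕ} {E : Finset (Fin (2 * n))} (hE : E.card = n)
    {σ σ' : Perm (Fin (2 * n))}
    (hσ_lo : ∀ j k : Fin (2 * n), (j : ℕ) < n → (k : ℕ) < n → j < k → σ j < σ k)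
    (hσ_mem : ∀ j : Fin (2 * n), σ j ∈ E ↔ (j : ℕ) < n)
    (hσ_hi : ∀ j k : Fin (2 * n), n ≤ (j : ℕ) → n ≤ (k : ℕ) → j < k → σ j < σ k)
    (hσ'_lo : ∀ j k : Fin (2 * n), (j : ℕ) < n → (k : ℕ) < n → j < k → σ' k < σ' j)
    (hσ'_mem : ∀ j : Fin (2 * n), σ' j ∈ E.image Fin.rev ↔ (j : ℕ) < n)
    (hσ'_hi : ∀ j k : Fin (2 * n), n ≤ (j : ℕ) → n ≤ (k : ℕ) → j < k → σ' j < σ' k) :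
    σ' = Fin.revPerm * σ * revSecondHalf n := by
  have first_half : (fun i => (σ' (finHalves n (.inl i))).rev) =
      fun i => σ (finHalves n (.inl i)) :=
    E.eq_of_strictMono_of_mem hE
      (fun i => Fin.mem_image_rev.1 ((hσ'_mem _).2 (by simp)))
      (fun i => (hσ_mem _).2 (by simp))
      (strictMono_comp_finHalves_inl fun j k hj hk hjk =>
        Fin.rev_lt_rev.2 (hσ'_lo j k hj hk hjk))
      (strictMono_comp_finHalves_inl hσ_lo)
  have hcard : ((E.image Fin.rev)ᶜ).card = n := by
    rw [Finset.card_compl, Finset.card_image_of_injective _ Fin.rev_injective, hE,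
      Fintype.card_fin]
    omega
  have second_half : (fun i => σ' (finHalves n (.inr i))) =
      fun i => (σ (finHalves n (.inr i.rev))).rev :=
    Finset.eq_of_strictMono_of_mem hcard
      (fun i => Finset.mem_compl.2 fun h => by simpa using (hσ'_mem _).1 h)
      (fun i => Finset.mem_compl.2 fun h => by
        rw [Fin.mem_image_rev, Fin.rev_rev] at h
        simpa using (hσ_mem _).1 h)
      (strictMono_comp_finHalves_inr hσ'_hi)
      (Fin.rev_strictAnti.comp
        ((strictMono_comp_finHalves_inr hσ_hi).comp_strictAnti Fin.rev_strictAnti))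
  ext j
  obtain ⟨i | i, rfl⟩ := (finHalves n).surjective j
  · simp [revSecondHalf, permCongr_apply, ← congrFun first_half i]
  · simp [revSecondHalf, permCongr_apply, congrFun second_half i]

/-- With n = 2m+1, E ⊆ {1,…,2n} of cardinality n (here 0-indexed as a
subset of `Fin (2*n)`, with j ↦ 2n+1-j rendered as `Fin.rev`), let σ be the permutation
sending the first half increasingly onto E and the second half increasingly onto Eᶜ,
and σ' the permutation sending the first half decreasingly onto 2n+1-E and the second
half increasingly onto E^⊥ = ((2n+1-E)ᶜ).  Then sgn σ' = (-1)^{m+1} · sgn σ. -/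
theorem stmt_0 (m n : ℕ) (hn : n = 2*m+1)
    (E : Finset (Fin (2*n))) (hE : E.card = n)
    (σ σ' : Equiv.Perm (Fin (2*n)))
    (hσmono : ∀ j k : Fin (2*n), (j:ℕ) < n → (k:ℕ) < n → j < k → σ j < σ k)
    (hσimg : ∀ j : Fin (2*n), σ j ∈ E ↔ (j:ℕ) < n)
    (hσmono2 : ∀ j k : Fin (2*n), n ≤ (j:ℕ) → n ≤ (k:ℕ) → j < k → σ j < σ k)
    (hσ'anti : ∀ j k : Fin (2*n), (j:ℕ) < n → (k:ℕ) < n → j < k → σ' k < σ' j)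
    (hσ'img : ∀ j : Fin (2*n), σ' j ∈ E.image Fin.rev ↔ (j:ℕ) < n)
    (hσ'mono2 : ∀ j k : Fin (2*n), n ≤ (j:ℕ) → n ≤ (k:ℕ) → j < k → σ' j < σ' k) :
    Equiv.Perm.sign σ' = (-1)^(m+1) * Equiv.Perm.sign σ := by
  rw [eq_revPerm_mul_mul_revSecondHalf hE hσmono hσimg hσmono2 hσ'anti hσ'img hσ'mono2,
    map_mul, map_mul, Fin.sign_revPerm, sign_revSecondHalf, Nat.mul_div_cancel_left _ two_pos,
    show n / 2 = m by omega, Odd.neg_one_pow ⟨m, hn⟩, pow_succ]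
  ac_rfl
end

section
/- Let n = 2m+1 and let E ⊆ {1,...,2n} have cardinality n. Define E^⊥ = (2n+1-E)^c and let σ_E be the permutation of {1,...,2n} sending {1,...,n} to the elements of E in increasing order and {n+1,...,2n} to the elements of E^c in increasing order. Then sgn(σ_E) = sgn(σ_{E^⊥}). -/
/-!
Reversal `w₀ : j ↦ 2n+1-j` reverses the order and swaps `{1,…,n}` with `{n+1,…,2n}`, so
`w₀ σ_E w₀` sends `{1,…,n}` increasingly onto `w₀(Eᶜ) = E^⊥` and `{n+1,…,2n}` increasingly onto
its complement. These properties determine a permutation, hence `σ_{E^⊥} = w₀ σ_E w₀⁻¹`, and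
conjugate permutations have the same sign.
-/

open Equiv Set

theorem StrictMonoOn.eqOn_of_image_eq {α β : Type*} [LinearOrder α] [WellFoundedLT α]
    [Preorder β] {f g : α → β} {s : Set α} (hf : StrictMonoOn f s) (hg : StrictMonoOn g s)
    (h : f '' s = g '' s) : s.EqOn f g := by
  rw [← Set.domRestrict_eq_domRestrict_iff]
  refine (StrictMono.range_inj (f := s.domRestrict f) (g := s.domRestrict g)
    (strictMonoOn_iff_strictMono.1 hf) (strictMonoOn_iff_strictMono.1 hg)).1 ?_
  simpa only [Set.range_domRestrict] using h

namespace Equiv.Perm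

variable {α : Type*}

theorem image_eq_of_mem_iff {σ : Perm α} {s t : Set α} (h : ∀ a, σ a ∈ t ↔ a ∈ s) :
    σ '' s = t := by
  ext x
  rw [Equiv.image_eq_preimage_symm, mem_preimage, ← h, apply_symm_apply]

theorem eq_of_strictMonoOn_of_mem_iff [LinearOrder α] [WellFoundedLT α] {s t : Set α}
    {σ σ' : Perm α} (hσs : StrictMonoOn σ s) (hσsc : StrictMonoOn σ sᶜ)
    (hσ : ∀ a, σ a ∈ t ↔ a ∈ s) (hσ's : StrictMonoOn σ' s) (hσ'sc : StrictMonoOn σ' sᶜ)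
    (hσ' : ∀ a, σ' a ∈ t ↔ a ∈ s) : σ = σ' := by
  have hcompl {τ : Perm α} (hτ : ∀ a, τ a ∈ t ↔ a ∈ s) (a : α) : τ a ∈ tᶜ ↔ a ∈ sᶜ :=
    not_congr (hτ a)
  ext1 a
  by_cases ha : a ∈ s
  · exact hσs.eqOn_of_image_eq hσ's
      (by rw [image_eq_of_mem_iff hσ, image_eq_of_mem_iff hσ']) ha
  · exact hσsc.eqOn_of_image_eq hσ'sc
      (by rw [image_eq_of_mem_iff (hcompl hσ), image_eq_of_mem_iff (hcompl hσ')]) ha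

end Equiv.Perm

theorem Fin.strictMonoOn_revPerm_conj {k : ℕ} {σ : Perm (Fin k)} {s : Set (Fin k)}
    (h : StrictMonoOn σ s) :
    StrictMonoOn ((Fin.revPerm.symm.trans σ).trans Fin.revPerm) (Fin.rev ⁻¹' s) :=
  fun _ ha _ hb hab => Fin.rev_lt_rev.2 (h hb ha (Fin.rev_lt_rev.2 hab))

theorem Fin.val_rev_lt_iff {n : ℕ} (j : Fin (2 * n)) : ((Fin.rev j : ℕ) < n) ↔ n ≤ (j : ℕ) := by
  rw [Fin.val_rev]
  omega

theorem stmt_1_general (n : ℕ)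
    (E : Finset (Fin (2*n)))
    (σ τ : Equiv.Perm (Fin (2*n)))
    (hσmono : ∀ j k : Fin (2*n), (j:ℕ) < n → (k:ℕ) < n → j < k → σ j < σ k)
    (hσimg : ∀ j : Fin (2*n), σ j ∈ E ↔ (j:ℕ) < n)
    (hσmono2 : ∀ j k : Fin (2*n), n ≤ (j:ℕ) → n ≤ (k:ℕ) → j < k → σ j < σ k)
    (hτmono : ∀ j k : Fin (2*n), (j:ℕ) < n → (k:ℕ) < n → j < k → τ j < τ k)
    (hτimg : ∀ j : Fin (2*n), τ j ∈ (E.image Fin.rev)ᶜ ↔ (j:ℕ) < n)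
    (hτmono2 : ∀ j k : Fin (2*n), n ≤ (j:ℕ) → n ≤ (k:ℕ) → j < k → τ j < τ k) :
    Equiv.Perm.sign σ = Equiv.Perm.sign τ := by
  set A : Set (Fin (2 * n)) := {j | (j : ℕ) < n}
  have onA {f : Perm (Fin (2 * n))}
      (hf : ∀ j k : Fin (2*n), (j:ℕ) < n → (k:ℕ) < n → j < k → f j < f k) :
      StrictMonoOn f A := fun j hj k hk => hf j k hj hk
  have onAc {f : Perm (Fin (2 * n))}
      (hf : ∀ j k : Fin (2*n), n ≤ (j:ℕ) → n ≤ (k:ℕ) → j < k → f j < f k) :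
      StrictMonoOn f Aᶜ := fun j hj k hk => hf j k (not_lt.1 hj) (not_lt.1 hk)
  have hrevA : Fin.rev ⁻¹' A = Aᶜ := by
    ext j
    simp only [A, mem_preimage, mem_compl_iff, mem_ofPred_eq, Fin.val_rev_lt_iff, not_lt]
  have hrevAc : Fin.rev ⁻¹' Aᶜ = A := by rw [preimage_compl, hrevA, compl_compl]
  have hconj : τ = (Fin.revPerm.symm.trans σ).trans Fin.revPerm := by
    refine Perm.eq_of_strictMonoOn_of_mem_iff (onA hτmono) (onAc hτmono2) hτimg ?_ ?_ ?_
    · simpa only [hrevAc] using Fin.strictMonoOn_revPerm_conj (onAc hσmono2)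
    · simpa only [hrevA] using Fin.strictMonoOn_revPerm_conj (onA hσmono)
    · intro j
      rw [Equiv.trans_apply, Equiv.trans_apply, Fin.revPerm_symm, Fin.revPerm_apply,
        Fin.revPerm_apply, Finset.mem_coe, Finset.mem_compl,
        Fin.rev_injective.mem_finset_image, hσimg, Fin.val_rev_lt_iff, not_le]
      rfl
  rw [hconj, Perm.sign_symm_trans_trans]

/-- With n = 2m+1 and E ⊆ {1,…,2n} of cardinality n (0-indexed in
`Fin (2*n)`, with j ↦ 2n+1-j rendered as `Fin.rev`), let σ (resp. τ) be the permutation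
sending {1,…,n} increasingly onto E (resp. onto E^⊥ = ((2n+1-E)ᶜ)) and {n+1,…,2n}
increasingly onto the complement.  Then sgn σ = sgn τ, i.e. sgn(σ_E) = sgn(σ_{E^⊥}). -/
theorem stmt_1 (m n : ℕ) (hn : n = 2*m+1)
    (E : Finset (Fin (2*n))) (hE : E.card = n)
    (σ τ : Equiv.Perm (Fin (2*n)))
    (hσmono : ∀ j k : Fin (2*n), (j:ℕ) < n → (k:ℕ) < n → j < k → σ j < σ k)
    (hσimg : ∀ j : Fin (2*n), σ j ∈ E ↔ (j:ℕ) < n)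
    (hσmono2 : ∀ j k : Fin (2*n), n ≤ (j:ℕ) → n ≤ (k:ℕ) → j < k → σ j < σ k)
    (hτmono : ∀ j k : Fin (2*n), (j:ℕ) < n → (k:ℕ) < n → j < k → τ j < τ k)
    (hτimg : ∀ j : Fin (2*n), τ j ∈ (E.image Fin.rev)ᶜ ↔ (j:ℕ) < n)
    (hτmono2 : ∀ j k : Fin (2*n), n ≤ (j:ℕ) → n ≤ (k:ℕ) → j < k → τ j < τ k) :
    Equiv.Perm.sign σ = Equiv.Perm.sign τ :=
  stmt_1_general n E σ τ hσmono hσimg hσmono2 hτmono hτimg hτmono2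
end

section
/- Let n = 2m+1 be odd, and let (v_i)_{i ∈ nℤ ± I} be a d-face of type I for some nonempty I ⊆ {0,...,m}, i.e. a family of vectors v_i ∈ ℤ^n satisfying: (F1) v_{i+n} = v_i - 1 (all-ones vector); (F2) v_i ≥ v_j componentwise for i ≤ j; (F3) Σv_i - Σv_j = j - i; (F4) v_i + v_{-i}^* = d (constant vector), where v^*(j) = v(n+1-j). Then d is even. -/
/-! Summing (F4) for some `c ∈ I` over all coordinates gives `Σv_c + Σv_{-c} = n d`, since reversal
does not change a sum, while (F3) gives `Σv_{-c} - Σv_c = 2c`. Hence `n d = 2 (Σv_c + c)` is even,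
and as `n` is odd, `d` is even. -/

lemma sum_add_sum_eq_mul_of_add_rev_eq {R : Type*} [Semiring R] {n : ℕ} {f g : Fin n → R} {d : R}
    (h : ∀ t, f t + g t.rev = d) : ∑ t, f t + ∑ t, g t = n * d := by
  rw [← Equiv.sum_comp Fin.revPerm g, ← Finset.sum_add_distrib]
  simp [h]

lemma even_of_odd_mul_even {n d : ℤ} (hn : Odd n) (h : Even (n * d)) : Even d :=
  (Int.even_mul.mp h).resolve_left (Int.not_even_iff_odd.mpr hn)

theorem stmt_3_general (m n : ℕ) (hn : n = 2*m+1) (I : Finset ℕ) (hI : I.Nonempty)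
    (d : ℤ)
    (S : Set ℤ) (hS : S = {i : ℤ | ∃ b : ℤ, ∃ c ∈ I, i = n*b + (c:ℤ) ∨ i = n*b - (c:ℤ)})
    (v : ℤ → Fin n → ℤ)
    (hF3 : ∀ i ∈ S, ∀ j ∈ S, (∑ t : Fin n, v i t) - (∑ t : Fin n, v j t) = j - i)
    (hF4 : ∀ i ∈ S, ∀ t : Fin n, v i t + v (-i) t.rev = d) :
    Even d := by
  obtain ⟨c, hc⟩ := hI
  have hcS : (c : ℤ) ∈ S := hS ▸ ⟨0, c, hc, Or.inl (by ring)⟩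
  have hncS : -(c : ℤ) ∈ S := hS ▸ ⟨0, c, hc, Or.inr (by ring)⟩
  have hsum := sum_add_sum_eq_mul_of_add_rev_eq (hF4 c hcS)
  have hdiff := hF3 (-c) hncS c hcS
  have hodd : Odd (n : ℤ) := ⟨m, by rw [hn]; push_cast; ring⟩
  refine even_of_odd_mul_even hodd ⟨∑ t, v c t + c, ?_⟩
  linarith

/-- Let n = 2m+1 be odd and let (v_i)_{i ∈ nℤ ± I} be a d-face of type I
(for some nonempty I ⊆ {0,…,m}): v_{i+n} = v_i - 1, v_i ≥ v_j for i ≤ j,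
Σv_i - Σv_j = j - i, and v_i + v_{-i}^* = d·1, where v^*(t) = v(n+1-t) is rendered via
`Fin.rev` (0-indexed).  Then d is even. -/
theorem stmt_3 (m n : ℕ) (hn : n = 2*m+1) (I : Finset ℕ) (hI : I.Nonempty)
    (hIm : ∀ i ∈ I, i ≤ m) (d : ℤ)
    (S : Set ℤ) (hS : S = {i : ℤ | ∃ b : ℤ, ∃ c ∈ I, i = n*b + (c:ℤ) ∨ i = n*b - (c:ℤ)})
    (v : ℤ → Fin n → ℤ)
    (hF1 : ∀ i ∈ S, ∀ t : Fin n, v (i + n) t = v i t - 1)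
    (hF2 : ∀ i ∈ S, ∀ j ∈ S, i ≤ j → ∀ t : Fin n, v j t ≤ v i t)
    (hF3 : ∀ i ∈ S, ∀ j ∈ S, (∑ t : Fin n, v i t) - (∑ t : Fin n, v j t) = j - i)
    (hF4 : ∀ i ∈ S, ∀ t : Fin n, v i t + v (-i) t.rev = d) :
    Even d :=
  stmt_3_general m n hn I hI d S hS v hF3 hF4
end

section
/- (Basic inequalities) Let n = 2m+1 and let (v_i)_{i∈nℤ±I} be a d-face of type I with μ_i := v_i - ω_i. Then for any i ∈ I: d ≤ μ_i(j) + μ_i(j^*) ≤ d+1 for all j ∈ A_i := {1,...,i} ∪ {i^*,...,n}, and d-1 ≤ μ_i(j) + μ_i(j^*) ≤ d for all j ∈ B_i := {i+1,...,n-i}, where j^* = n+1-j and i^* = n+1-i. -/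
/-- The standard vector ω_i ∈ ℤ^n for i = nb + c, 0 ≤ c < n: the first c entries are
-1 - b and the remaining entries are -b (0-indexed via `Fin n`). -/
def omegaVec (n : ℕ) (i : ℤ) : Fin n → ℤ :=
  fun t => (if (t : ℤ) < i % (n : ℤ) then -1 else 0) - i / (n : ℤ)

/-!
Write `μ_i(t) + μ_i(t^*) = (v_i(t) + v_i(t^*)) - (ω_i(t) + ω_i(t^*))`. The symmetry
`v_i(t) + v_{-i}(t^*) = d` turns the first bracket into `d + v_i(t^*) - v_{-i}(t^*)`, and
monotonicity along `-i ≤ i ≤ n - i` together with `v_{n-i} = v_{-i} - 1` squeezes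
`v_i(t^*) - v_{-i}(t^*)` into `{-1, 0}`. Since `0 ≤ i < n`, `ω_i` is `-1` on the first `i`
coordinates and `0` elsewhere; as `2i < n`, exactly one of `t, t^*` is among them when
`t ∈ A_i` and neither is when `t ∈ B_i`.
-/

lemma omegaVec_of_lt {n i : ℕ} (hi : i < n) (t : Fin n) :
    omegaVec n i t = if (t : ℕ) < i then -1 else 0 := by
  have hmod : (i : ℤ) % (n : ℤ) = i := Int.emod_eq_of_lt (by omega) (by omega)
  have hdiv : (i : ℤ) / (n : ℤ) = 0 := Int.ediv_eq_zero_of_lt (by omega) (by omega)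
  simp only [omegaVec, hmod, hdiv, Nat.cast_lt, sub_zero]

lemma omegaVec_add_omegaVec_rev {n i : ℕ} (h2i : 2 * i < n) (t : Fin n) :
    omegaVec n i t + omegaVec n i t.rev =
      if (t : ℕ) < i ∨ n - i ≤ (t : ℕ) then -1 else 0 := by
  have hrev : (t.rev : ℕ) = n - ((t : ℕ) + 1) := Fin.val_rev t
  have ht := t.isLt
  rw [omegaVec_of_lt (by omega), omegaVec_of_lt (by omega)]
  split_ifs <;> omega

lemma face_add_rev_bounds {n : ℕ} {S : Set ℤ} {v : ℤ → Fin n → ℤ} {d : ℤ}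
    (hF1 : ∀ i ∈ S, ∀ t : Fin n, v (i + n) t = v i t - 1)
    (hF2 : ∀ i ∈ S, ∀ j ∈ S, i ≤ j → ∀ t : Fin n, v j t ≤ v i t)
    (hF4 : ∀ i ∈ S, ∀ t : Fin n, v i t + v (-i) t.rev = d)
    {i : ℤ} (hi : 0 ≤ i) (h2i : 2 * i ≤ n) (hiS : i ∈ S) (hniS : -i ∈ S) (hn_iS : n - i ∈ S)
    (t : Fin n) :
    d - 1 ≤ v i t + v i t.rev ∧ v i t + v i t.rev ≤ d := by
  have hsym := hF4 i hiS t
  have hle := hF2 (-i) hniS i hiS (by omega) t.rev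
  have hge := hF2 i hiS (n - i) hn_iS (by omega) t.rev
  have hper := hF1 (-i) hniS t.rev
  rw [neg_add_eq_sub] at hper
  constructor <;> omega

theorem stmt_5_general (m n : ℕ) (hn : n = 2*m+1) (I : Finset ℕ)
    (hIm : ∀ i ∈ I, i ≤ m) (d : ℤ)
    (S : Set ℤ) (hS : S = {i : ℤ | ∃ b : ℤ, ∃ c ∈ I, i = n*b + (c:ℤ) ∨ i = n*b - (c:ℤ)})
    (v : ℤ → Fin n → ℤ)
    (hF1 : ∀ i ∈ S, ∀ t : Fin n, v (i + n) t = v i t - 1)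
    (hF2 : ∀ i ∈ S, ∀ j ∈ S, i ≤ j → ∀ t : Fin n, v j t ≤ v i t)
    (hF4 : ∀ i ∈ S, ∀ t : Fin n, v i t + v (-i) t.rev = d) :
    ∀ i ∈ I, ∀ t : Fin n,
      (((t : ℕ) < i ∨ n - i ≤ (t : ℕ)) →
        d ≤ (v (i:ℤ) t - omegaVec n i t) + (v (i:ℤ) t.rev - omegaVec n i t.rev) ∧
        (v (i:ℤ) t - omegaVec n i t) + (v (i:ℤ) t.rev - omegaVec n i t.rev) ≤ d + 1) ∧
      ((i ≤ (t : ℕ) ∧ (t : ℕ) < n - i) →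
        d - 1 ≤ (v (i:ℤ) t - omegaVec n i t) + (v (i:ℤ) t.rev - omegaVec n i t.rev) ∧
        (v (i:ℤ) t - omegaVec n i t) + (v (i:ℤ) t.rev - omegaVec n i t.rev) ≤ d) := by
  intro i hi t
  have h2i : 2 * i < n := by have := hIm i hi; omega
  have hiS : (i : ℤ) ∈ S := hS ▸ ⟨0, i, hi, Or.inl (by ring)⟩
  have hniS : -(i : ℤ) ∈ S := hS ▸ ⟨0, i, hi, Or.inr (by ring)⟩
  have hn_iS : (n : ℤ) - i ∈ S := hS ▸ ⟨1, i, hi, Or.inr (by ring)⟩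
  obtain ⟨hlo, hhi⟩ :=
    face_add_rev_bounds hF1 hF2 hF4 (by positivity) (by omega) hiS hniS hn_iS t
  have hω := omegaVec_add_omegaVec_rev h2i t
  constructor
  · intro hA
    rw [if_pos hA] at hω
    constructor <;> linarith
  · intro hB
    rw [if_neg (by omega)] at hω
    constructor <;> linarith

/-- Basic inequalities: For a d-face (v_i)_{i∈nℤ±I} of type I with
μ_i := v_i - ω_i, and i ∈ I: d ≤ μ_i(j) + μ_i(j^*) ≤ d+1 for j ∈ A_i = {1,…,i} ∪ {i^*,…,n}
(0-indexed: t < i or n - i ≤ t), and d-1 ≤ μ_i(j) + μ_i(j^*) ≤ d for j ∈ B_i = {i+1,…,n-i}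
(0-indexed: i ≤ t < n - i); here j^* = n+1-j is rendered via `Fin.rev`. -/
theorem stmt_5 (m n : ℕ) (hn : n = 2*m+1) (I : Finset ℕ) (hI : I.Nonempty)
    (hIm : ∀ i ∈ I, i ≤ m) (d : ℤ)
    (S : Set ℤ) (hS : S = {i : ℤ | ∃ b : ℤ, ∃ c ∈ I, i = n*b + (c:ℤ) ∨ i = n*b - (c:ℤ)})
    (v : ℤ → Fin n → ℤ)
    (hF1 : ∀ i ∈ S, ∀ t : Fin n, v (i + n) t = v i t - 1)
    (hF2 : ∀ i ∈ S, ∀ j ∈ S, i ≤ j → ∀ t : Fin n, v j t ≤ v i t)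
    (hF3 : ∀ i ∈ S, ∀ j ∈ S, (∑ t : Fin n, v i t) - (∑ t : Fin n, v j t) = j - i)
    (hF4 : ∀ i ∈ S, ∀ t : Fin n, v i t + v (-i) t.rev = d) :
    ∀ i ∈ I, ∀ t : Fin n,
      (((t : ℕ) < i ∨ n - i ≤ (t : ℕ)) →
        d ≤ (v (i:ℤ) t - omegaVec n i t) + (v (i:ℤ) t.rev - omegaVec n i t.rev) ∧
        (v (i:ℤ) t - omegaVec n i t) + (v (i:ℤ) t.rev - omegaVec n i t.rev) ≤ d + 1) ∧
      ((i ≤ (t : ℕ) ∧ (t : ℕ) < n - i) →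
        d - 1 ≤ (v (i:ℤ) t - omegaVec n i t) + (v (i:ℤ) t.rev - omegaVec n i t.rev) ∧
        (v (i:ℤ) t - omegaVec n i t) + (v (i:ℤ) t.rev - omegaVec n i t.rev) ≤ d) :=
  stmt_5_general m n hn I hIm d S hS v hF1 hF2 hF4
end

section
/- Let n = 2m+1 and let (v_i)_i be a d-face of type I with μ_i := v_i - ω_i. Then μ_i(m+1) = d/2 for all i ∈ nℤ ± I (in particular d is even). -/
/-!
Self-duality `v_i + v_{-i}^* = d` together with `ω_{-i} = -ω_i^*` gives `μ_i + μ_{-i}^* = d`, and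
`μ` is `n`-periodic, so it suffices to show `v_c = v_{-c}` at the middle entry for `c ∈ I`
(there `ω_{±c}` vanishes as `c ≤ m`). The vector `δ = v_c - v_{n-c} = v_c - v_{-c} + 1` has entries
in `{0, 1}` by monotonicity (`c ≤ n - c ≤ c + n`), is invariant under reversal by self-duality, and
has odd sum `n - 2c`. Reversal pairs off all entries but the middle one, so the middle entry of `δ`
is odd, hence `1`.
-/

lemma omegaVec_of_nonneg_of_lt {n : ℕ} {i : ℤ} (h0 : 0 ≤ i) (h1 : i < n) (t : Fin n) :
    omegaVec n i t = if (t : ℤ) < i then -1 else 0 := by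
  simp [omegaVec, Int.emod_eq_of_lt h0 h1, Int.ediv_eq_zero_of_lt h0 h1]

lemma omegaVec_add_mul (n : ℕ) (i b : ℤ) (t : Fin n) :
    omegaVec n (i + n * b) t = omegaVec n i t - b := by
  have hn : (n : ℤ) ≠ 0 := by have := t.pos; omega
  simp only [omegaVec, Int.add_mul_emod_self_left, Int.add_mul_ediv_left _ _ hn]
  ring

lemma omegaVec_neg (n : ℕ) (i : ℤ) (t : Fin n) : omegaVec n (-i) t = -omegaVec n i t.rev := by
  have hn : (0 : ℤ) < n := by have := t.pos; omega
  suffices h : ∀ r : ℤ, 0 ≤ r → r < n → omegaVec n (-r) t = -omegaVec n r t.rev by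
    have hi : i = i % n + n * (i / n) := (Int.emod_add_mul_ediv i n).symm
    rw [hi, neg_add, ← mul_neg, omegaVec_add_mul, omegaVec_add_mul,
      h _ (Int.emod_nonneg i hn.ne') (Int.emod_lt_of_pos i hn)]
    ring
  intro r h0 h1
  rcases h0.eq_or_lt with rfl | hr
  · rw [neg_zero, omegaVec_of_nonneg_of_lt le_rfl hn, omegaVec_of_nonneg_of_lt le_rfl hn]
    split_ifs <;> omega
  · have : -r = (n - r) + n * (-1) := by ring
    rw [this, omegaVec_add_mul, omegaVec_of_nonneg_of_lt (by omega) (by omega),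
      omegaVec_of_nonneg_of_lt h0 h1, Fin.val_rev]
    split_ifs <;> omega

lemma Int.apply_eq_sub_of_apply_add_one {f : ℤ → ℤ} (h : ∀ b, f (b + 1) = f b - 1) (b : ℤ) :
    f b = f 0 - b := by
  induction b using Int.induction_on with
  | zero => simp
  | succ k ih => rw [h, ih]; ring
  | pred k ih => have := h (-k - 1); rw [sub_add_cancel, ih] at this; omega

lemma Fin.sum_modEq_apply_of_rev {n : ℕ} (f : Fin n → ℤ) (hf : ∀ t, f t.rev = f t)
    {mid : Fin n} (hmid : mid.rev = mid) : ∑ t, f t ≡ f mid [ZMOD 2] := by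
  refine (ZMod.intCast_eq_intCast_iff _ _ 2).mp ?_
  rw [Int.cast_sum, ← Finset.add_sum_erase _ _ (Finset.mem_univ mid), add_eq_left]
  refine Finset.sum_involution (fun t _ => t.rev) (fun t _ => ?_) (fun t ht _ h => ?_)
    (fun t ht => ?_) (fun t _ => Fin.rev_rev t)
  · rw [hf, CharTwo.add_self_eq_zero]
  · refine (Finset.mem_erase.mp ht).1 (Fin.ext ?_)
    have := congrArg Fin.val h
    have := congrArg Fin.val hmid
    simp only [Fin.val_rev] at *
    omega
  · refine Finset.mem_erase.mpr ⟨fun h => (Finset.mem_erase.mp ht).1 ?_, Finset.mem_univ _⟩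
    rw [← Fin.rev_rev t, h, hmid]

lemma Fin.apply_eq_one_of_odd_sum {n : ℕ} (δ : Fin n → ℤ) (hδ : ∀ t, 0 ≤ δ t ∧ δ t ≤ 1)
    (hrev : ∀ t, δ t.rev = δ t) (hodd : Odd (∑ t, δ t)) {mid : Fin n} (hmid : mid.rev = mid) :
    δ mid = 1 := by
  have hmod := Fin.sum_modEq_apply_of_rev δ hrev hmid
  rw [Int.odd_iff] at hodd
  have := hδ mid
  unfold Int.ModEq at hmod
  omega

/-- `μ_i := v_i - ω_i`. -/
def faceMu (n : ℕ) (v : ℤ → Fin n → ℤ) (i : ℤ) (t : Fin n) : ℤ := v i t - omegaVec n i t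

section Face

variable {n : ℕ} {S : Set ℤ} {v : ℤ → Fin n → ℤ} {d : ℤ}

lemma face_add_mul (hS : ∀ i ∈ S, ∀ b : ℤ, i + n * b ∈ S)
    (hF1 : ∀ i ∈ S, ∀ t, v (i + n) t = v i t - 1) {i : ℤ} (hi : i ∈ S) (b : ℤ) (t : Fin n) :
    v (i + n * b) t = v i t - b := by
  simpa using Int.apply_eq_sub_of_apply_add_one (f := fun b => v (i + n * b) t)
    (fun b => by rw [mul_add, mul_one, ← add_assoc]; exact hF1 _ (hS i hi b) t) b

lemma faceMu_add_mul (hS : ∀ i ∈ S, ∀ b : ℤ, i + n * b ∈ S)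
    (hF1 : ∀ i ∈ S, ∀ t, v (i + n) t = v i t - 1) {i : ℤ} (hi : i ∈ S) (b : ℤ) (t : Fin n) :
    faceMu n v (i + n * b) t = faceMu n v i t := by
  rw [faceMu, faceMu, face_add_mul hS hF1 hi, omegaVec_add_mul]
  ring

lemma faceMu_add_faceMu_neg_rev (hF4 : ∀ i ∈ S, ∀ t : Fin n, v i t + v (-i) t.rev = d)
    {i : ℤ} (hi : i ∈ S) (t : Fin n) : faceMu n v i t + faceMu n v (-i) t.rev = d := by
  rw [faceMu, faceMu, omegaVec_neg, Fin.rev_rev]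
  linarith [hF4 i hi t]

lemma face_apply_neg_eq_apply (hS : ∀ i ∈ S, i + n ∈ S)
    (hF1 : ∀ i ∈ S, ∀ t, v (i + n) t = v i t - 1)
    (hF2 : ∀ i ∈ S, ∀ j ∈ S, i ≤ j → ∀ t, v j t ≤ v i t)
    (hF3 : ∀ i ∈ S, ∀ j ∈ S, (∑ t, v i t) - (∑ t, v j t) = j - i)
    (hF4 : ∀ i ∈ S, ∀ t, v i t + v (-i) t.rev = d)
    {c : ℤ} (hc0 : 0 ≤ c) (hc : c ∈ S) (hnc : -c ∈ S) {mid : Fin n} (hmid : mid.rev = mid)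
    (hcmid : c ≤ mid) : v (-c) mid = v c mid := by
  have hn : (n : ℤ) = 2 * mid + 1 := by
    have := congrArg Fin.val hmid
    rw [Fin.val_rev] at this
    omega
  have hdown := hF1 (-c) hnc
  have hsymm (t : Fin n) : v c t.rev - v (-c) t.rev = v c t - v (-c) t := by
    have := hF4 c hc t.rev
    rw [Fin.rev_rev] at this
    linarith [hF4 c hc t]
  have hδ := Fin.apply_eq_one_of_odd_sum (fun t => v c t - v (-c + n) t) (fun t => ⟨?_, ?_⟩)
    (fun t => by simp only [hdown]; linarith [hsymm t]) ?_ hmid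
  · simp only [hdown] at hδ
    omega
  · linarith [hF2 c hc (-c + n) (hS _ hnc) (by omega) t]
  · linarith [hF2 (-c + n) (hS _ hnc) (c + n) (hS _ hc) (by omega) t, hF1 c hc t]
  · rw [Finset.sum_sub_distrib, hF3 c hc _ (hS _ hnc)]
    exact ⟨mid - c, by omega⟩

lemma two_mul_faceMu_eq (hS : ∀ i ∈ S, i + n ∈ S)
    (hF1 : ∀ i ∈ S, ∀ t, v (i + n) t = v i t - 1)
    (hF2 : ∀ i ∈ S, ∀ j ∈ S, i ≤ j → ∀ t, v j t ≤ v i t)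
    (hF3 : ∀ i ∈ S, ∀ j ∈ S, (∑ t, v i t) - (∑ t, v j t) = j - i)
    (hF4 : ∀ i ∈ S, ∀ t, v i t + v (-i) t.rev = d)
    {c : ℤ} (hc0 : 0 ≤ c) (hc : c ∈ S) (hnc : -c ∈ S) {mid : Fin n} (hmid : mid.rev = mid)
    (hcmid : c ≤ mid) : 2 * faceMu n v c mid = d ∧ 2 * faceMu n v (-c) mid = d := by
  have hω : omegaVec n c mid = 0 := by
    rw [omegaVec_of_nonneg_of_lt hc0 (by omega), if_neg (by omega)]
  have hω' : omegaVec n (-c) mid = 0 := by rw [omegaVec_neg, hmid, hω, neg_zero]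
  have hsum := faceMu_add_faceMu_neg_rev hF4 hc mid
  rw [hmid] at hsum
  have heq : faceMu n v (-c) mid = faceMu n v c mid := by
    rw [faceMu, faceMu, hω, hω', face_apply_neg_eq_apply hS hF1 hF2 hF3 hF4 hc0 hc hnc hmid hcmid]
  constructor <;> linarith

end Face

/-- For a d-face (v_i)_i of type I with μ_i := v_i - ω_i, the middle entry
satisfies μ_i(m+1) = d/2 for all i ∈ nℤ ± I (stated as 2·μ_i(m+1) = d, the middle index
m+1 being index m in the 0-indexed `Fin n`); in particular d is even. -/
theorem stmt_6 (m n : ℕ) (hn : n = 2*m+1) (I : Finset ℕ) (hI : I.Nonempty)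
    (hIm : ∀ i ∈ I, i ≤ m) (d : ℤ)
    (S : Set ℤ) (hS : S = {i : ℤ | ∃ b : ℤ, ∃ c ∈ I, i = n*b + (c:ℤ) ∨ i = n*b - (c:ℤ)})
    (v : ℤ → Fin n → ℤ)
    (hF1 : ∀ i ∈ S, ∀ t : Fin n, v (i + n) t = v i t - 1)
    (hF2 : ∀ i ∈ S, ∀ j ∈ S, i ≤ j → ∀ t : Fin n, v j t ≤ v i t)
    (hF3 : ∀ i ∈ S, ∀ j ∈ S, (∑ t : Fin n, v i t) - (∑ t : Fin n, v j t) = j - i)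
    (hF4 : ∀ i ∈ S, ∀ t : Fin n, v i t + v (-i) t.rev = d) :
    Even d ∧ ∀ i ∈ S,
      2 * (v i ⟨m, by omega⟩ - omegaVec n i ⟨m, by omega⟩) = d := by
  set mid : Fin n := ⟨m, by omega⟩
  have hmid : mid.rev = mid := Fin.ext (by simp only [Fin.val_rev, mid]; omega)
  have hmem (b : ℤ) {c : ℕ} (hc : c ∈ I) : n * b + c ∈ S ∧ n * b - c ∈ S := by
    rw [hS]
    exact ⟨⟨b, c, hc, Or.inl rfl⟩, ⟨b, c, hc, Or.inr rfl⟩⟩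
  have hSadd : ∀ i ∈ S, ∀ b : ℤ, i + n * b ∈ S := by
    intro i hi b
    rw [hS] at hi
    obtain ⟨b', c, hc, rfl | rfl⟩ := hi
    · simpa only [mul_add, add_right_comm] using (hmem (b' + b) hc).1
    · simpa only [mul_add, sub_add_eq_add_sub] using (hmem (b' + b) hc).2
  have hpm : ∀ c ∈ I, (c : ℤ) ∈ S ∧ -(c : ℤ) ∈ S := fun c hc => by simpa using hmem 0 hc
  have hmidI (c : ℕ) (hc : c ∈ I) :
      2 * faceMu n v c mid = d ∧ 2 * faceMu n v (-(c : ℤ)) mid = d :=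
    two_mul_faceMu_eq (fun i hi => by simpa using hSadd i hi 1) hF1 hF2 hF3 hF4 (by omega)
      (hpm c hc).1 (hpm c hc).2 hmid (by simpa [mid] using hIm c hc)
  refine ⟨?_, fun i hi => ?_⟩
  · obtain ⟨c, hc⟩ := hI
    exact ⟨_, (hmidI c hc).1.symm.trans (two_mul _)⟩
  · change 2 * faceMu n v i mid = d
    rw [hS] at hi
    obtain ⟨b, c, hc, rfl | rfl⟩ := hi
    · rw [add_comm, faceMu_add_mul hSadd hF1 (hpm c hc).1]
      exact (hmidI c hc).1
    · rw [sub_eq_neg_add, faceMu_add_mul hSadd hF1 (hpm c hc).2]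
      exact (hmidI c hc).2
end

section
/- (Self-duality criterion) Let n = 2m+1 and (v_i)_i a d-face of type I with μ_i := v_i - ω_i. Fix i ∈ I and let μ ∈ {μ_i, μ_{-i}}. If μ(j) + μ(j^*) = d holds for all j ∈ A_i = {1,...,i} ∪ {i^*,...,n}, or for all j ∈ B_i = {i+1,...,n-i}, then μ + μ^* = d·1 (i.e. μ is self-dual). -/
private lemma count_lt (n i : ℕ) (h : i ≤ n) :
    ∑ t : Fin n, (if (t : ℕ) < i then (1:ℤ) else 0) = i := by
  rw [Fin.sum_univ_eq_sum_range (fun k => if k < i then (1:ℤ) else 0) n]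
  rw [← Finset.sum_subset (Finset.range_subset_range.mpr h)
    (by intro x hx hx'; simp at hx' ⊢; omega)]
  rw [Finset.sum_congr rfl (fun x hx => if_pos (Finset.mem_range.mp hx))]
  simp

/-- Self-duality criterion: Let (v_i)_i be a d-face of type I with
μ_i := v_i - ω_i.  Fix i ∈ I and let μ ∈ {μ_i, μ_{-i}}.  If μ(j) + μ(j^*) = d for all
j ∈ A_i = {1,…,i} ∪ {i^*,…,n} (0-indexed: t < i or n - i ≤ t) or for all
j ∈ B_i = {i+1,…,n-i} (0-indexed: i ≤ t < n - i), then μ + μ^* = d·1; here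
j^* = n+1-j is rendered via `Fin.rev`. -/
theorem stmt_7 (m n : ℕ) (hn : n = 2*m+1) (I : Finset ℕ) (hI : I.Nonempty)
    (hIm : ∀ i ∈ I, i ≤ m) (d : ℤ)
    (S : Set ℤ) (hS : S = {i : ℤ | ∃ b : ℤ, ∃ c ∈ I, i = n*b + (c:ℤ) ∨ i = n*b - (c:ℤ)})
    (v : ℤ → Fin n → ℤ)
    (hF1 : ∀ i ∈ S, ∀ t : Fin n, v (i + n) t = v i t - 1)
    (hF2 : ∀ i ∈ S, ∀ j ∈ S, i ≤ j → ∀ t : Fin n, v j t ≤ v i t)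
    (hF3 : ∀ i ∈ S, ∀ j ∈ S, (∑ t : Fin n, v i t) - (∑ t : Fin n, v j t) = j - i)
    (hF4 : ∀ i ∈ S, ∀ t : Fin n, v i t + v (-i) t.rev = d)
    (i : ℕ) (hi : i ∈ I) (μ : Fin n → ℤ)
    (hμ : (∀ t, μ t = v (i : ℤ) t - omegaVec n (i : ℤ) t) ∨
          (∀ t, μ t = v (-(i : ℤ)) t - omegaVec n (-(i : ℤ)) t))
    (hcond : (∀ t : Fin n, ((t : ℕ) < i ∨ n - i ≤ (t : ℕ)) → μ t + μ t.rev = d) ∨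
             (∀ t : Fin n, (i ≤ (t : ℕ) ∧ (t : ℕ) < n - i) → μ t + μ t.rev = d)) :
    ∀ t : Fin n, μ t + μ t.rev = d := by
  have him : i ≤ m := hIm i hi
  have hin : i < n := by omega
  have hcn : (i:ℤ) < n := by exact_mod_cast hin
  have hc0 : (0:ℤ) ≤ (i:ℤ) := Int.ofNat_nonneg i
  have hn0 : (0:ℤ) < (n:ℤ) := by omega
  -- membership facts
  have hcS : (i:ℤ) ∈ S := by rw [hS]; exact ⟨0, i, hi, Or.inl (by ring)⟩
  have hncS : (-(i:ℤ)) ∈ S := by rw [hS]; exact ⟨0, i, hi, Or.inr (by ring)⟩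
  have hnS : (-(i:ℤ) + n) ∈ S := by rw [hS]; exact ⟨1, i, hi, Or.inr (by ring)⟩
  -- basic inequalities between v_i and v_{-i}
  have hle : ∀ t, v (i:ℤ) t ≤ v (-(i:ℤ)) t :=
    hF2 (-(i:ℤ)) hncS (i:ℤ) hcS (by omega)
  have hge : ∀ t, v (-(i:ℤ)) t ≤ v (i:ℤ) t + 1 := by
    intro t
    have h1 := hF1 (-(i:ℤ)) hncS t
    have h2 := hF2 (i:ℤ) hcS (-(i:ℤ) + n) hnS (by push_cast [hn]; omega) t
    omega
  -- sums
  have hsum : (∑ t : Fin n, v (-(i:ℤ)) t) - (∑ t : Fin n, v (i:ℤ)  t) = 2*(i:ℤ) := by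
    have := hF3 (-(i:ℤ)) hncS (i:ℤ) hcS
    linarith
  -- duality for v
  have hd1 : ∀ t : Fin n, v (i:ℤ) t + v (-(i:ℤ)) t.rev = d := hF4 (i:ℤ) hcS
  have hd2 : ∀ t : Fin n, v (-(i:ℤ)) t + v (i:ℤ) t.rev = d := by
    intro t
    have := hF4 (-(i:ℤ)) hncS t
    rwa [neg_neg] at this
  -- rev values
  have hrev : ∀ t : Fin n, ((t.rev : ℕ) : ℤ) = (n:ℤ) - 1 - (t:ℕ) := by
    intro t
    rw [Fin.val_rev]
    have := t.isLt
    push_cast [Nat.sub_sub]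
    omega
  -- the indicator of A
  set F : Fin n → ℤ := fun t => if ((t : ℕ) < i ∨ n - i ≤ (t : ℕ)) then 1 else 0 with hF
  -- omega computations
  have hmod : (i:ℤ) % n = i := Int.emod_eq_of_lt hc0 hcn
  have hdiv : (i:ℤ) / n = 0 := Int.ediv_eq_zero_of_lt hc0 hcn
  have homega1 : ∀ t : Fin n, omegaVec n (i:ℤ) t + omegaVec n (i:ℤ) t.rev = -(F t) := by
    intro t
    have ht := t.isLt
    have hr := hrev t
    simp only [omegaVec, hmod, hdiv, hF]
    split_ifs <;> omega
  have homega2 : ∀ t : Fin n, omegaVec n (-(i:ℤ)) t + omegaVec n (-(i:ℤ)) t.rev = F t := by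
    intro t
    have ht := t.isLt
    have hr := hrev t
    rcases Nat.eq_zero_or_pos i with h0 | hpos
    · subst h0
      simp only [omegaVec, hF]
      norm_num
      omega
    · have hmod2 : (-(i:ℤ)) % n = n - i := by
        rw [show (-(i:ℤ)) = ((n:ℤ) - i) + n * (-1) by ring, Int.add_mul_emod_self_left]
        exact Int.emod_eq_of_lt (by omega) (by omega)
      have hdiv2 : (-(i:ℤ)) / n = -1 := by
        have h := Int.mul_ediv_add_emod (-(i:ℤ)) n
        rw [hmod2] at h
        have : (n:ℤ) * ((-(i:ℤ)) / n) = n * (-1) := by ring_nf; ring_nf at h; omega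
        exact mul_left_cancel₀ (by omega) this
      simp only [omegaVec, hmod2, hdiv2, hF]
      split_ifs <;> omega
  -- the function G = D + F
  set G : Fin n → ℤ := fun t => (v (i:ℤ) t - v (-(i:ℤ)) t) + F t with hG
  -- the key pointwise identity
  have hkey : (∀ t : Fin n, μ t + μ t.rev - d = G t) ∨
      (∀ t : Fin n, μ t + μ t.rev - d = -(G t)) := by
    rcases hμ with h | h
    · left
      intro t
      have e1 := hd2 t
      have e2 := homega1 t
      simp only [h, hG]
      omega
    · right
      intro t
      have e1 := hd1 t
      have e2 := homega2 t
      simp only [h, hG]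
      omega
  -- sum of F is 2i
  have hFsum : ∑ t : Fin n, F t = 2*(i:ℤ) := by
    have hsplit : ∀ t : Fin n, F t =
        (if (t : ℕ) < i then (1:ℤ) else 0) + (1 - (if (t : ℕ) < n - i then (1:ℤ) else 0)) := by
      intro t
      have ht := t.isLt
      simp only [hF]
      split_ifs <;> omega
    calc ∑ t : Fin n, F t
        = (∑ t : Fin n, (if (t : ℕ) < i then (1:ℤ) else 0)) +
          ((n:ℤ) - ∑ t : Fin n, (if (t : ℕ) < n - i then (1:ℤ) else 0)) := by
          rw [Finset.sum_congr rfl (fun t _ => hsplit t), Finset.sum_add_distrib,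
            Finset.sum_sub_distrib]
          simp [Finset.card_univ]
      _ = 2*(i:ℤ) := by
          rw [count_lt n i (by omega), count_lt n (n - i) (by omega)]
          push_cast
          omega
  -- sum of G is 0
  have hGsum : ∑ t : Fin n, G t = 0 := by
    simp only [hG]
    rw [Finset.sum_add_distrib, Finset.sum_sub_distrib, hFsum]
    omega
  -- bounds on G
  have hGA : ∀ t : Fin n, ((t : ℕ) < i ∨ n - i ≤ (t : ℕ)) → 0 ≤ G t ∧ G t ≤ 1 := by
    intro t ht
    have h1 := hle t
    have h2 := hge t
    simp only [hG, hF, if_pos ht]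
    omega
  have hGB : ∀ t : Fin n, ¬((t : ℕ) < i ∨ n - i ≤ (t : ℕ)) → -1 ≤ G t ∧ G t ≤ 0 := by
    intro t ht
    have h1 := hle t
    have h2 := hge t
    simp only [hG, hF, if_neg ht]
    omega
  -- G vanishes on A or on B
  have hGzero : ∀ t : Fin n, G t = 0 := by
    rcases hcond with hA | hB
    · -- G = 0 on A, G ≤ 0 everywhere, sum 0
      have hnp : ∀ t : Fin n, G t ≤ 0 := by
        intro t
        by_cases ht : (t : ℕ) < i ∨ n - i ≤ (t : ℕ)
        · have := hA t ht
          rcases hkey with hk | hk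
          · have := hk t; omega
          · have := hk t; omega
        · exact (hGB t ht).2
      intro t
      exact (Finset.sum_eq_zero_iff_of_nonpos (fun t _ => hnp t)).mp hGsum t (Finset.mem_univ t)
    · -- G = 0 on B, G ≥ 0 everywhere, sum 0
      have hnn : ∀ t : Fin n, 0 ≤ G t := by
        intro t
        by_cases ht : (t : ℕ) < i ∨ n - i ≤ (t : ℕ)
        · exact (hGA t ht).1
        · have ht' : i ≤ (t : ℕ) ∧ (t : ℕ) < n - i := by omega
          have := hB t ht'
          rcases hkey with hk | hk
          · have := hk t; omega
          · have := hk t; omega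
      intro t
      exact (Finset.sum_eq_zero_iff_of_nonneg (fun t _ => hnn t)).mp hGsum t (Finset.mem_univ t)
  intro t
  rcases hkey with hk | hk
  · have := hk t; have := hGzero t; omega
  · have := hk t; have := hGzero t; omega
end

section
/- (Symplectic convex hull) Let N = 2m and V = {x ∈ ℝ^{2m} : x_1 + x_{2m} = x_2 + x_{2m-1} = ... = x_m + x_{m+1}}. Let S_{2m}^* = {σ ∈ S_{2m} : σ(2m+1-j) = 2m+1-σ(j) for all j}. For a dominant μ = (n_1,...,n_{2m}) ∈ V ∩ ℤ^{2m}, the convex hull of S_{2m}^*·μ equals Conv(S_{2m}·μ) ∩ V, and also equals {x ∈ V : c(x) = c(μ) and ν·x ≤ n_1 + ... + n_i for all 1 ≤ i ≤ m and all ν ∈ S_{2m}^*·ν_i}, where c(x) denotes the common value x_j + x_{2m+1-j}. -/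
/-!
Write C for the set cut out by c(x) = c(μ) and the prefix inequalities. The inclusions
conv(S*·μ) ⊆ conv(S·μ) ∩ V ⊆ C are routine: V is convex and contains S*·μ, while on conv(S·μ)
the coordinate sum is constant (which pins down c(x) = c(μ)) and, by the rearrangement inequality
for the antitone μ, every prefix sum of a permuted point is at most that of μ.

For C ⊆ conv(S*·μ) we separate: it suffices that every linear functional ℓ is at most as large at
x ∈ C as at some point of S*·μ. On vectors with reversal sum c, ℓ is an affine function of the
centred first half x_k - c/2 with coefficients d_k. Ordering the k by decreasing |d_k| and
choosing the signs of d_k gives a signed permutation whose image of μ maximises ℓ, and Abel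
summation compares that maximum with ℓ(x) using exactly the prefix inequalities defining C.
-/

open Finset

namespace SymplecticHull
section

variable {N : ℕ}

def IsSymplectic (σ : Equiv.Perm (Fin N)) : Prop := ∀ j, σ j.rev = (σ j).rev

def HasRevSum (z : Fin N → ℝ) (c : ℝ) : Prop := ∀ a, z a + z a.rev = c

lemma HasRevSum.comp {z : Fin N → ℝ} {c : ℝ} (hz : HasRevSum z c)
    {σ : Equiv.Perm (Fin N)} (hσ : IsSymplectic σ) : HasRevSum (z ∘ σ) c := fun a => by
  simp only [Function.comp_apply, hσ a, hz (σ a)]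

lemma HasRevSum.two_mul_sum {z : Fin N → ℝ} {c : ℝ} (hz : HasRevSum z c) :
    2 * ∑ a, z a = N * c := by
  conv_lhs => rw [two_mul]; enter [2]; rw [← Equiv.sum_comp Fin.revPerm]
  simp [← sum_add_distrib, hz _]

def prefixSum (f : Fin N → ℝ) (i : ℕ) : ℝ :=
  ∑ t ∈ univ.filter (fun t : Fin N => (t : ℕ) < i), f t

lemma prefixSum_comp_castLE {n : ℕ} (h : n ≤ N) (f : Fin N → ℝ) {i : ℕ} (hi : i ≤ n) :
    prefixSum (f ∘ Fin.castLE h) i = prefixSum f i := by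
  have hsegment : univ.filter (fun t : Fin N => (t : ℕ) < i)
      = (univ.filter fun k : Fin n => (k : ℕ) < i).map (Fin.castLEEmb h) := by
    ext t
    simp only [mem_map, mem_filter, mem_univ, true_and, Fin.castLEEmb_apply]
    exact ⟨fun ht => ⟨⟨t, by omega⟩, ht, rfl⟩, fun ⟨k, hk, hkt⟩ => hkt ▸ hk⟩
  rw [prefixSum, prefixSum, hsegment, sum_map]
  rfl

lemma prefixSum_of_le (f : Fin N → ℝ) {i : ℕ} (hi : N ≤ i) : prefixSum f i = ∑ t, f t := by
  rw [prefixSum, filter_true_of_mem fun t _ => by omega]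

lemma prefixSum_const_add (c : ℝ) (f : Fin N → ℝ) {i : ℕ} (hi : i ≤ N) :
    prefixSum (fun t => c + f t) i = i * c + prefixSum f i := by
  rw [prefixSum, prefixSum, sum_add_distrib, sum_const, Fin.card_filter_val_lt,
    min_eq_right hi, nsmul_eq_mul]

lemma prefixSum_comp_perm_le {μ : Fin N → ℝ} (hμ : Antitone μ) (π : Equiv.Perm (Fin N))
    (i : ℕ) : prefixSum (μ ∘ π) i ≤ prefixSum μ i := by
  have hind : Antitone fun t : Fin N => if (t : ℕ) < i then (1 : ℝ) else 0 := by
    intro a b (hab : (a : ℕ) ≤ b)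
    dsimp only
    split_ifs <;> first | (exfalso; omega) | norm_num
  simpa [prefixSum, sum_filter, ite_smul] using
    (hind.monovary hμ).sum_smul_comp_perm_le_sum_smul (σ := π)

theorem sum_mul_le_sum_mul_of_prefixSum_le {n : ℕ} {u v w : Fin n → ℝ} (hu : Antitone u)
    (hu0 : ∀ k, 0 ≤ u k) (hvw : ∀ i ≤ n, prefixSum v i ≤ prefixSum w i) :
    ∑ k, u k * v k ≤ ∑ k, u k * w k := by
  induction n with
  | zero => simp
  | succ n ih =>
    set u' : Fin n → ℝ := fun k => u k.castSucc - u (Fin.last n)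
    have hsplit (f : Fin (n + 1) → ℝ) :
        ∑ k, u k * f k = ∑ k, u' k * f k.castSucc + u (Fin.last n) * ∑ k, f k := by
      simp only [Fin.sum_univ_castSucc, u', mul_add, sub_mul, sum_sub_distrib, mul_sum]
      ring
    have hinit : ∑ k, u' k * v k.castSucc ≤ ∑ k, u' k * w k.castSucc :=
      ih (fun a b hab => sub_le_sub_right (hu (Fin.castSucc_le_castSucc_iff.2 hab)) _)
        (fun k => sub_nonneg.2 (hu (Fin.le_last _)))
        (fun i hi => (prefixSum_comp_castLE n.le_succ v hi).trans_le
          ((hvw i (by omega)).trans_eq (prefixSum_comp_castLE n.le_succ w hi).symm))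
    have htotal : ∑ k, v k ≤ ∑ k, w k := by
      simpa only [prefixSum_of_le _ le_rfl] using hvw (n + 1) le_rfl
    rw [hsplit v, hsplit w]
    gcongr
    exact hu0 _

def permOrbit (μ : Fin N → ℝ) : Set (Fin N → ℝ) :=
  {y | ∃ σ : Equiv.Perm (Fin N), ∀ t, y t = μ (σ t)}

def symplecticOrbit (μ : Fin N → ℝ) : Set (Fin N → ℝ) :=
  {y | ∃ σ : Equiv.Perm (Fin N), IsSymplectic σ ∧ ∀ t, y t = μ (σ t)}

lemma sum_eq_of_mem_convexHull_permOrbit {μ x : Fin N → ℝ}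
    (hx : x ∈ convexHull ℝ (permOrbit μ)) : ∑ t, x t = ∑ t, μ t := by
  refine convexHull_min ?_ (convex_hyperplane (f := fun z : Fin N → ℝ => ∑ t, z t)
    ⟨fun _ _ => sum_add_distrib, fun _ _ => (mul_sum _ _ _).symm⟩ _) hx
  rintro y ⟨σ, hy⟩
  exact (sum_congr rfl fun t _ => hy t).trans (Equiv.sum_comp σ μ)

lemma prefixSum_le_of_mem_convexHull_permOrbit {μ x : Fin N → ℝ} (hμ : Antitone μ)
    (hx : x ∈ convexHull ℝ (permOrbit μ)) (σ : Equiv.Perm (Fin N)) (i : ℕ) :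
    prefixSum (x ∘ σ) i ≤ prefixSum μ i := by
  refine convexHull_min ?_ (convex_halfSpace_le (f := fun z : Fin N → ℝ => prefixSum (z ∘ σ) i)
    ⟨fun _ _ => sum_add_distrib, fun _ _ => by simp [prefixSum, mul_sum]⟩ _) hx
  rintro y ⟨τ, hy⟩
  obtain rfl : y = μ ∘ τ := funext hy
  exact prefixSum_comp_perm_le hμ (σ.trans τ) i

lemma convexHull_symplecticOrbit_subset {μ : Fin N → ℝ} {c : ℝ} (hμ : HasRevSum μ c) :
    convexHull ℝ (symplecticOrbit μ)
      ⊆ convexHull ℝ (permOrbit μ) ∩ {x | ∀ j k, x j + x j.rev = x k + x k.rev} := by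
  have hV : Convex ℝ {x : Fin N → ℝ | ∀ j k, x j + x j.rev = x k + x k.rev} :=
    fun p hp q hq a b _ _ _ j k => by
      simp only [Pi.add_apply, Pi.smul_apply, smul_eq_mul]
      linear_combination a * hp j k + b * hq j k
  refine convexHull_min ?_ ((convex_convexHull ℝ _).inter hV)
  rintro y ⟨σ, hσ, hy⟩
  refine ⟨subset_convexHull ℝ _ ⟨σ, hy⟩, fun j k => ?_⟩
  obtain rfl : y = μ ∘ σ := funext hy
  rw [hμ.comp hσ j, hμ.comp hσ k]

lemma mem_convexHull_of_forall_dotProduct_le {ι : Type*} [Fintype ι] {P : Set (ι → ℝ)}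
    (hP : P.Finite) {x : ι → ℝ} (h : ∀ ℓ : ι → ℝ, ∃ p ∈ P, ℓ ⬝ᵥ x ≤ ℓ ⬝ᵥ p) :
    x ∈ convexHull ℝ P := by
  classical
  by_contra hx
  obtain ⟨f, u, hfP, hux⟩ := geometric_hahn_banach_closed_point (convex_convexHull ℝ P)
    (hP.isClosed_convexHull ℝ) hx
  have hf (z : ι → ℝ) : f z = (fun j => f (Pi.single j 1)) ⬝ᵥ z := by
    conv_lhs => rw [pi_eq_sum_univ' z]
    simp [dotProduct, mul_comm]
  obtain ⟨p, hp, hle⟩ := h fun j => f (Pi.single j 1)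
  linarith [hfP p (subset_convexHull ℝ P hp), hf x, hf p]

end

def pairEquiv (m : ℕ) : Fin m × Bool ≃ Fin (2 * m) where
  toFun p := if p.2 then Fin.castLE (by omega) p.1 else (Fin.castLE (by omega) p.1).rev
  invFun a :=
    if h : (a : ℕ) < m then (⟨a, h⟩, true) else (⟨a.rev, by rw [Fin.val_rev]; omega⟩, false)
  left_inv := by
    rintro ⟨k, _ | _⟩
    · have hk : m ≤ 2 * m - (k + 1) := by omega
      simp [hk]
    · simp
  right_inv a := by
    by_cases h : (a : ℕ) < m
    · simp [h]
    · simp only [h, dite_false, if_neg Bool.false_ne_true]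
      exact Fin.rev_rev a

variable {m : ℕ}

lemma pairEquiv_true (k : Fin m) : pairEquiv m (k, true) = Fin.castLE (by omega) k := rfl

lemma rev_pairEquiv (k : Fin m) (b : Bool) : (pairEquiv m (k, b)).rev = pairEquiv m (k, !b) := by
  cases b <;> simp [pairEquiv]

lemma HasRevSum.apply_pairEquiv_false {x : Fin (2 * m) → ℝ} {c : ℝ} (hx : HasRevSum x c)
    (k : Fin m) : x (pairEquiv m (k, false)) = c - x (pairEquiv m (k, true)) := by
  rw [← hx (pairEquiv m (k, true)), rev_pairEquiv, Bool.not_true]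
  ring

def signedPerm (ρ : Equiv.Perm (Fin m)) (s : Fin m → Bool) : Equiv.Perm (Fin (2 * m)) :=
  (pairEquiv m).symm.trans <|
    (Equiv.prodShear ρ fun k => if s k then Equiv.refl Bool else Equiv.boolNot).trans (pairEquiv m)

lemma signedPerm_apply (ρ : Equiv.Perm (Fin m)) (s : Fin m → Bool) (k : Fin m) (b : Bool) :
    signedPerm ρ s (pairEquiv m (k, b)) = pairEquiv m (ρ k, if s k then b else !b) := by
  by_cases h : s k <;> simp [signedPerm, h, Equiv.boolNot]

lemma isSymplectic_signedPerm (ρ : Equiv.Perm (Fin m)) (s : Fin m → Bool) :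
    IsSymplectic (signedPerm ρ s) := by
  intro a
  obtain ⟨⟨k, b⟩, rfl⟩ := (pairEquiv m).surjective a
  rw [rev_pairEquiv, signedPerm_apply, signedPerm_apply, rev_pairEquiv]
  cases s k <;> simp

/-- `prefixSum (x ∘ σ) i` is the paper's `ν · x` for `ν = σ⁻¹ · ν_i ∈ S_{2m}^* · ν_i`. -/
def dominatedSet (μ : Fin (2 * m) → ℝ) (c : ℝ) : Set (Fin (2 * m) → ℝ) :=
  {x | HasRevSum x c ∧ ∀ σ, IsSymplectic σ → ∀ i ≤ m, prefixSum (x ∘ σ) i ≤ prefixSum μ i}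

lemma convexHull_permOrbit_inter_subset_dominatedSet (hm : 0 < m) {μ : Fin (2 * m) → ℝ}
    (hμ : Antitone μ) {c : ℝ} (hμc : HasRevSum μ c) :
    convexHull ℝ (permOrbit μ) ∩ {x | ∀ j k, x j + x j.rev = x k + x k.rev}
      ⊆ dominatedSet μ c := by
  rintro x ⟨hxO, hxV⟩
  refine ⟨fun j => ?_, fun σ _ i _ => prefixSum_le_of_mem_convexHull_permOrbit hμ hxO σ i⟩
  have hsum := congrArg (2 * ·) (sum_eq_of_mem_convexHull_permOrbit hxO)
  simp only [HasRevSum.two_mul_sum (hxV · j), hμc.two_mul_sum] at hsum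
  exact mul_left_cancel₀ (by positivity) hsum

/-- A vector with reversal sum `c` is determined by these centred coordinates of its first half. -/
noncomputable def halfCoord (z : Fin (2 * m) → ℝ) (c : ℝ) (k : Fin m) : ℝ :=
  z (pairEquiv m (k, true)) - c / 2

lemma dotProduct_eq_of_hasRevSum (ℓ : Fin (2 * m) → ℝ) {x : Fin (2 * m) → ℝ} {c : ℝ}
    (hx : HasRevSum x c) :
    ℓ ⬝ᵥ x = ∑ k, (ℓ (pairEquiv m (k, true)) - ℓ (pairEquiv m (k, false))) * halfCoord x c k
      + c / 2 * ∑ a, ℓ a := by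
  simp only [dotProduct, halfCoord, ← Equiv.sum_comp (pairEquiv m), Fintype.sum_prod_type,
    Fintype.sum_bool, hx.apply_pairEquiv_false, mul_sum, ← sum_add_distrib]
  exact sum_congr rfl fun k _ => by ring

lemma prefixSum_eq_halfCoord (z : Fin (2 * m) → ℝ) (c : ℝ) {i : ℕ} (hi : i ≤ m) :
    prefixSum z i = i * (c / 2) + prefixSum (halfCoord z c) i := by
  rw [← prefixSum_comp_castLE (by omega) z hi, ← prefixSum_const_add _ _ hi]
  congr 1
  funext k
  simp [halfCoord, pairEquiv_true]

lemma halfCoord_comp_signedPerm {z : Fin (2 * m) → ℝ} {c : ℝ} (hz : HasRevSum z c)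
    (ρ : Equiv.Perm (Fin m)) (s : Fin m → Bool) (k : Fin m) :
    halfCoord (z ∘ signedPerm ρ s) c k
      = if s k then halfCoord z c (ρ k) else -halfCoord z c (ρ k) := by
  rw [halfCoord, Function.comp_apply, signedPerm_apply]
  split_ifs
  · rfl
  · rw [Bool.not_true, hz.apply_pairEquiv_false, halfCoord]
    ring

lemma ite_decide_nonneg_eq_abs (a : ℝ) : (if decide (0 ≤ a) then a else -a) = |a| := by
  by_cases h : 0 ≤ a
  · simp [h, abs_of_nonneg h]
  · simp [h, abs_of_neg (not_le.1 h)]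

theorem sum_mul_le_sum_abs_mul_of_prefixSum_le {d y b : Fin m → ℝ} (π : Equiv.Perm (Fin m))
    (hπ : Antitone fun k => |d (π k)|)
    (hyb : ∀ i ≤ m, prefixSum (fun k => |y (π k)|) i ≤ prefixSum b i) :
    ∑ k, d k * y k ≤ ∑ k, |d k| * b (π⁻¹ k) :=
  calc ∑ k, d k * y k
      ≤ ∑ k, |d k| * |y k| := sum_le_sum fun k _ => (le_abs_self _).trans (abs_mul _ _).le
    _ = ∑ k, |d (π k)| * |y (π k)| := (Equiv.sum_comp π fun k => |d k| * |y k|).symm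
    _ ≤ ∑ k, |d (π k)| * b k :=
        sum_mul_le_sum_mul_of_prefixSum_le hπ (fun _ => abs_nonneg _) hyb
    _ = ∑ k, |d k| * b (π⁻¹ k) := by
        rw [← Equiv.sum_comp π fun k => |d k| * b (π⁻¹ k)]
        simp

theorem exists_isSymplectic_dotProduct_le {μ x : Fin (2 * m) → ℝ} {c : ℝ}
    (hμ : HasRevSum μ c) (hx : HasRevSum x c)
    (hdom : ∀ σ, IsSymplectic σ → ∀ i ≤ m, prefixSum (x ∘ σ) i ≤ prefixSum μ i)
    (ℓ : Fin (2 * m) → ℝ) : ∃ σ, IsSymplectic σ ∧ ℓ ⬝ᵥ x ≤ ℓ ⬝ᵥ (μ ∘ σ) := by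
  set d : Fin m → ℝ := fun k => ℓ (pairEquiv m (k, true)) - ℓ (pairEquiv m (k, false))
  set π := Tuple.sort fun k => -|d k|
  have hπ : Antitone fun k => |d (π k)| := fun _ _ h =>
    neg_le_neg_iff.1 (Tuple.monotone_sort (fun k => -|d k|) h)
  have hprefix (i : ℕ) (hi : i ≤ m) :
      prefixSum (fun k => |halfCoord x c (π k)|) i ≤ prefixSum (halfCoord μ c) i := by
    set τ := signedPerm π fun k => decide (0 ≤ halfCoord x c (π k))
    have hτ := hdom τ (isSymplectic_signedPerm _ _) i hi
    have habs : halfCoord (x ∘ τ) c = fun k => |halfCoord x c (π k)| := funext fun k => by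
      rw [halfCoord_comp_signedPerm hx, ite_decide_nonneg_eq_abs]
    rw [prefixSum_eq_halfCoord _ c hi, prefixSum_eq_halfCoord _ c hi, habs] at hτ
    linarith
  have hσ := isSymplectic_signedPerm π⁻¹ fun k => decide (0 ≤ d k)
  refine ⟨_, hσ, ?_⟩
  rw [dotProduct_eq_of_hasRevSum ℓ hx, dotProduct_eq_of_hasRevSum ℓ (hμ.comp hσ)]
  gcongr ?_ + _
  refine (sum_mul_le_sum_abs_mul_of_prefixSum_le π hπ hprefix).trans_eq
    (sum_congr rfl fun k _ => ?_)
  rw [halfCoord_comp_signedPerm hμ]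
  by_cases h : 0 ≤ d k
  · rw [abs_of_nonneg h, if_pos (decide_eq_true h)]
  · rw [abs_of_neg (not_le.1 h), if_neg (by simpa using h), mul_neg, neg_mul]

lemma dominatedSet_subset_convexHull {μ : Fin (2 * m) → ℝ} {c : ℝ} (hμ : HasRevSum μ c) :
    dominatedSet μ c ⊆ convexHull ℝ (symplecticOrbit μ) := by
  rintro x ⟨hx, hdom⟩
  refine mem_convexHull_of_forall_dotProduct_le ?_ fun ℓ => ?_
  · refine (Set.finite_range fun σ : Equiv.Perm (Fin (2 * m)) => μ ∘ σ).subset ?_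
    rintro y ⟨σ, -, hy⟩
    exact ⟨σ, (funext hy).symm⟩
  · obtain ⟨σ, hσ, hle⟩ := exists_isSymplectic_dotProduct_le hμ hx hdom ℓ
    exact ⟨μ ∘ σ, ⟨σ, hσ, fun _ => rfl⟩, hle⟩

end SymplecticHull

open SymplecticHull in
/-- Symplectic convex hull: For a dominant μ ∈ V ∩ ℤ^{2m}, where
V = {x : x_1 + x_{2m} = … = x_m + x_{m+1}} (j ↦ 2m+1-j rendered as `Fin.rev`), the
convex hull of the S_{2m}^*-orbit of μ equals Conv(S_{2m}·μ) ∩ V, and also equals the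
set of x ∈ V with c(x) = c(μ) and ν·x ≤ n_1 + … + n_i for all 1 ≤ i ≤ m and all
ν ∈ S_{2m}^*·ν_i (such ν·x being the sum of x(σ(t)) over the first i coordinates t,
for σ ∈ S_{2m}^*). -/
theorem stmt_10 (m : ℕ) (hm : 0 < m) (μ : Fin (2*m) → ℤ)
    (hdom : ∀ j k : Fin (2*m), j ≤ k → μ k ≤ μ j)
    (hμV : ∀ j k : Fin (2*m), μ j + μ j.rev = μ k + μ k.rev) :
    convexHull ℝ {y : Fin (2*m) → ℝ | ∃ σ : Equiv.Perm (Fin (2*m)),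
        (∀ j, σ j.rev = (σ j).rev) ∧ ∀ t, y t = (μ (σ t) : ℝ)}
      = convexHull ℝ {y : Fin (2*m) → ℝ | ∃ σ : Equiv.Perm (Fin (2*m)), ∀ t, y t = (μ (σ t) : ℝ)}
        ∩ {x : Fin (2*m) → ℝ | ∀ j k : Fin (2*m), x j + x j.rev = x k + x k.rev}
    ∧ convexHull ℝ {y : Fin (2*m) → ℝ | ∃ σ : Equiv.Perm (Fin (2*m)),
        (∀ j, σ j.rev = (σ j).rev) ∧ ∀ t, y t = (μ (σ t) : ℝ)}
      = {x : Fin (2*m) → ℝ |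
          (∀ j : Fin (2*m), x j + x j.rev
              = (μ (⟨0, by omega⟩ : Fin (2*m)) : ℝ) + (μ (Fin.rev ⟨0, by omega⟩) : ℝ)) ∧
          ∀ σ : Equiv.Perm (Fin (2*m)), (∀ j, σ j.rev = (σ j).rev) →
            ∀ i ≤ m, ∑ t ∈ Finset.univ.filter (fun t : Fin (2*m) => (t : ℕ) < i), x (σ t)
              ≤ ∑ t ∈ Finset.univ.filter (fun t : Fin (2*m) => (t : ℕ) < i), (μ t : ℝ)} := by
  have hanti : Antitone fun j => (μ j : ℝ) := fun j k h => Int.cast_le.2 (hdom j k h)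
  have hrev : HasRevSum (fun j => (μ j : ℝ))
      ((μ ⟨0, by omega⟩ : ℝ) + μ (Fin.rev ⟨0, by omega⟩)) := fun a => by
    show (μ a : ℝ) + μ a.rev = _
    exact_mod_cast hμV a ⟨0, by omega⟩
  have hAB := convexHull_symplecticOrbit_subset hrev
  have hBC := convexHull_permOrbit_inter_subset_dominatedSet hm hanti hrev
  have hCA := dominatedSet_subset_convexHull hrev
  exact ⟨hAB.antisymm (hBC.trans hCA), (hAB.trans hBC).antisymm hCA⟩
end

section
/- Let W̃_G = X ⋊ S_n^* where n = 2m+1, X = {(x_1,...,x_n) ∈ ℤ^n : x_1+x_n = ... = x_m+x_{m+2} = 2x_{m+1}}, and S_n^* = {σ ∈ S_n : σ(n+1-j) = n+1-σ(j)}. Then the map (x_1,...,x_n) ↦ (x_1,...,x_m,x_{m+2},...,x_n) on translation parts (deleting the middle coordinate), together with the natural isomorphism S_n^* ≅ S_{2m}^* (restriction of a *-symmetric permutation of {1,...,n} to {1,...,n}\{m+1}), defines an injective group homomorphism W̃_G → W̃_{GSp} := X' ⋊ S_{2m}^*, where X' = {(y_1,...,y_{2m}) ∈ ℤ^{2m}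 : y_1+y_{2m} = ... = y_m+y_{m+1}}, whose image has index 2. -/
/-- An "affine pair" (v, σ): the affine transformation p ↦ v + σ·p of ℤ^k, where
(σ·p)(t) = p(σ⁻¹ t).  These form a group, the semidirect product ℤ^k ⋊ S_k. -/
@[ext]
structure AffPair (k : ℕ) where
  v : Fin k → ℤ
  p : Equiv.Perm (Fin k)

namespace AffPair

variable {k : ℕ}

instance : Group (AffPair k) where
  mul g h := ⟨g.v + fun t => h.v (g.p⁻¹ t), g.p * h.p⟩
  one := ⟨0, 1⟩
  inv g := ⟨fun t => -(g.v (g.p t)), g.p⁻¹⟩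
  mul_assoc a b c := by
    refine AffPair.ext ?_ (mul_assoc ..)
    funext t
    show (a.v t + b.v (a.p⁻¹ t)) + c.v ((a.p * b.p)⁻¹ t)
        = a.v t + (b.v (a.p⁻¹ t) + c.v (b.p⁻¹ (a.p⁻¹ t)))
    simp [mul_inv_rev, add_assoc]
  one_mul a := by
    refine AffPair.ext ?_ (one_mul ..)
    funext t
    show 0 + a.v t = a.v t
    simp
  mul_one a := by
    refine AffPair.ext ?_ (mul_one ..)
    funext t
    show a.v t + (0 : Fin k → ℤ) (a.p⁻¹ t) = a.v t
    simp
  inv_mul_cancel a := by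
    refine AffPair.ext ?_ (inv_mul_cancel ..)
    funext t
    show -(a.v (a.p t)) + a.v ((a.p⁻¹)⁻¹ t) = (0 : Fin k → ℤ) t
    simp

lemma mul_v (g h : AffPair k) : (g * h).v = g.v + fun t => h.v (g.p⁻¹ t) := rfl
lemma mul_p (g h : AffPair k) : (g * h).p = g.p * h.p := rfl
lemma one_v : (1 : AffPair k).v = 0 := rfl
lemma one_p : (1 : AffPair k).p = 1 := rfl
lemma inv_v (g : AffPair k) : g⁻¹.v = fun t => -(g.v (g.p t)) := rfl
lemma inv_p (g : AffPair k) : g⁻¹.p = g.p⁻¹ := rfl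

end AffPair

/-- A permutation is ∗-symmetric if it commutes with j ↦ rev j (i.e. j ↦ N+1-j). -/
def IsStarPerm {N : ℕ} (σ : Equiv.Perm (Fin N)) : Prop :=
  ∀ j : Fin N, σ j.rev = (σ j).rev

lemma isStarPerm_inv {N : ℕ} {σ : Equiv.Perm (Fin N)} (h : IsStarPerm σ) :
    IsStarPerm σ⁻¹ := by
  intro j
  apply σ.injective
  rw [h (σ⁻¹ j)]; simp only [Equiv.Perm.coe_inv, Equiv.apply_symm_apply]

lemma isStarPerm_mul {N : ℕ} {σ τ : Equiv.Perm (Fin N)} (hσ : IsStarPerm σ)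
    (hτ : IsStarPerm τ) : IsStarPerm (σ * τ) := by
  intro j
  simp [Equiv.Perm.mul_apply, hτ j, hσ (τ j)]

/-- The middle index m of Fin (2m+1) (i.e. m+1 in 1-indexed notation). -/
def midIdx (m : ℕ) : Fin (2*m+1) := ⟨m, by omega⟩

lemma rev_midIdx (m : ℕ) : (midIdx m).rev = midIdx m := by
  ext
  simp [midIdx, Fin.rev]
  omega

lemma starPerm_fixes_mid {m : ℕ} {σ : Equiv.Perm (Fin (2*m+1))} (h : IsStarPerm σ) :
    σ (midIdx m) = midIdx m := by
  have h1 := h (midIdx m)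
  rw [rev_midIdx] at h1
  have h2 : (σ (midIdx m)).rev = σ (midIdx m) := h1.symm
  have h3 : ((σ (midIdx m)).rev).val = (σ (midIdx m)).val := congrArg Fin.val h2
  have h4 : (σ (midIdx m)).val < 2*m+1 := (σ (midIdx m)).isLt
  rw [Fin.val_rev] at h3
  ext
  show (σ (midIdx m)).val = m
  omega

/-- The Iwahori–Weyl group W̃_G = X ⋊ S_n^*, n = 2m+1, realized inside the group of
affine transformations of ℤ^n: translation parts lie in
X = {x : x_1 + x_n = … = x_m + x_{m+2} = 2x_{m+1}} and linear parts in S_n^*. -/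
def WtildeG (m : ℕ) : Subgroup (AffPair (2*m+1)) where
  carrier := {g | (∀ j : Fin (2*m+1), g.v j + g.v j.rev = 2 * g.v (midIdx m)) ∧
    IsStarPerm g.p}
  one_mem' := by
    constructor
    · intro j; simp [AffPair.one_v]
    · intro j; simp [AffPair.one_p]
  mul_mem' := by
    rintro g h ⟨hgv, hgp⟩ ⟨hhv, hhp⟩
    constructor
    · intro j
      have hinv : IsStarPerm g.p⁻¹ := isStarPerm_inv hgp
      have hmid : g.p⁻¹ (midIdx m) = midIdx m := starPerm_fixes_mid hinv
      simp only [AffPair.mul_v, Pi.add_apply]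
      rw [hinv j, hmid]
      have := hhv (g.p⁻¹ j)
      have := hgv j
      ring_nf
      omega
    · exact isStarPerm_mul hgp hhp
  inv_mem' := by
    rintro g ⟨hgv, hgp⟩
    constructor
    · intro j
      have hmid : g.p (midIdx m) = midIdx m := starPerm_fixes_mid hgp
      simp only [AffPair.inv_v, AffPair.inv_p]
      rw [hgp j, hmid]
      have := hgv (g.p j)
      omega
    · exact isStarPerm_inv hgp
  
/-- The Iwahori–Weyl group W̃_{GSp} = X' ⋊ S_{2m}^* of GSp_{2m}, realized inside the
group of affine transformations of ℤ^{2m}: translation parts lie in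
X' = {y : y_1 + y_{2m} = … = y_m + y_{m+1}} and linear parts in S_{2m}^*. -/
def WtildeGSp (m : ℕ) : Subgroup (AffPair (2*m)) where
  carrier := {g | (∀ j l : Fin (2*m), g.v j + g.v j.rev = g.v l + g.v l.rev) ∧
    IsStarPerm g.p}
  one_mem' := by
    constructor
    · intro j l; simp [AffPair.one_v]
    · intro j; simp [AffPair.one_p]
  mul_mem' := by
    rintro g h ⟨hgv, hgp⟩ ⟨hhv, hhp⟩
    constructor
    · intro j l
      have hinv : IsStarPerm g.p⁻¹ := isStarPerm_inv hgp
      simp only [AffPair.mul_v, Pi.add_apply]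
      rw [hinv j, hinv l]
      have h1 := hhv (g.p⁻¹ j) (g.p⁻¹ l)
      have h2 := hgv j l
      omega
    · exact isStarPerm_mul hgp hhp
  inv_mem' := by
    rintro g ⟨hgv, hgp⟩
    constructor
    · intro j l
      simp only [AffPair.inv_v, AffPair.inv_p]
      rw [hgp j, hgp l]
      have := hgv (g.p j) (g.p l)
      omega
    · exact isStarPerm_inv hgp

/-- The embedding Fin (2m) → Fin (2m+1) skipping the middle index m
(deleting the middle coordinate). -/
def iotaIdx (m : ℕ) (t : Fin (2*m)) : Fin (2*m+1) :=
  ⟨if (t : ℕ) < m then (t : ℕ) else (t : ℕ) + 1, by have := t.isLt; split <;> omega⟩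

/-!
Permutations of `Fin (2m+1)` fixing the middle index are the same as permutations of
`Fin (2m)`, and a ∗-symmetric permutation fixes the middle index, so deleting the middle
coordinate is a homomorphism `W̃_G → W̃_{GSp}`. On `W̃_{GSp}` the common value
`y_j + y_{2m+1-j}` is a character to `ℤ` (the similitude factor); on the image it equals
`2 x_{m+1}`, which recovers the deleted coordinate, whence injectivity. Conversely an element
with even similitude factor `2c` lifts by inserting `c` as middle coordinate, so the image is
the kernel of the similitude factor mod 2, which is onto `ℤ/2`.
-/

namespace Fin

theorem succAbove_rev_of_rev_eq {n : ℕ} {q : Fin (n + 1)} (hq : q.rev = q) (t : Fin n) :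
    q.succAbove t.rev = (q.succAbove t).rev := by
  rw [succAbove_rev_right, hq]

end Fin

namespace Equiv.Perm

variable {n : ℕ} {q : Fin (n + 1)}

def restrictSuccAbove (σ : Perm (Fin (n + 1))) (hσ : σ q = q) : Perm (Fin n) :=
  (finSuccAboveEquiv q).symm.permCongr (σ.subtypePerm fun _ => σ.injective.ne_iff' hσ)

theorem succAbove_restrictSuccAbove (σ : Perm (Fin (n + 1))) (hσ : σ q = q) (t : Fin n) :
    q.succAbove (σ.restrictSuccAbove hσ t) = σ (q.succAbove t) :=
  congrArg Subtype.val ((finSuccAboveEquiv q).apply_symm_apply _)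

theorem succAbove_restrictSuccAbove_inv (σ : Perm (Fin (n + 1))) (hσ : σ q = q) (t : Fin n) :
    q.succAbove ((σ.restrictSuccAbove hσ)⁻¹ t) = σ⁻¹ (q.succAbove t) := by
  rw [eq_inv_iff_eq, ← succAbove_restrictSuccAbove σ hσ, ← mul_apply, mul_inv_cancel,
    one_apply]

theorem extendDomain_succAbove (τ : Perm (Fin n)) (t : Fin n) :
    τ.extendDomain (finSuccAboveEquiv q) (q.succAbove t) = q.succAbove (τ t) :=
  extendDomain_apply_image τ (finSuccAboveEquiv q) t

theorem extendDomain_self (τ : Perm (Fin n)) : τ.extendDomain (finSuccAboveEquiv q) q = q :=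
  extendDomain_apply_not_subtype τ _ (not_not.mpr rfl)

end Equiv.Perm

section StarPerm

open Equiv Perm

variable {n : ℕ} {q : Fin (n + 1)}

theorem IsStarPerm.restrictSuccAbove (hq : q.rev = q) {σ : Perm (Fin (n + 1))}
    (h : IsStarPerm σ) (hσ : σ q = q) : IsStarPerm (σ.restrictSuccAbove hσ) := by
  intro t
  apply q.succAbove_right_injective
  rw [succAbove_restrictSuccAbove, Fin.succAbove_rev_of_rev_eq hq, h,
    Fin.succAbove_rev_of_rev_eq hq, succAbove_restrictSuccAbove]

theorem IsStarPerm.extendDomain (hq : q.rev = q) {τ : Perm (Fin n)} (h : IsStarPerm τ) :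
    IsStarPerm (τ.extendDomain (finSuccAboveEquiv q)) := by
  intro j
  rcases q.eq_self_or_eq_succAbove j with rfl | ⟨t, rfl⟩
  · rw [hq, extendDomain_self, hq]
  · rw [← Fin.succAbove_rev_of_rev_eq hq, extendDomain_succAbove, extendDomain_succAbove, h,
      Fin.succAbove_rev_of_rev_eq hq]

end StarPerm

namespace AffPair

open Equiv Perm

variable {n : ℕ} (q : Fin (n + 1))

def linearStabilizer : Subgroup (AffPair (n + 1)) where
  carrier := {g | g.p q = q}
  one_mem' := rfl
  mul_mem' {g h} hg hh := by
    show (g.p * h.p) q = q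
    rw [mul_apply, show h.p q = q from hh, hg]
  inv_mem' {g} hg := inv_eq_iff_eq.mpr (Eq.symm hg)

variable {q} in
theorem mem_linearStabilizer {g : AffPair (n + 1)} : g ∈ linearStabilizer q ↔ g.p q = q :=
  Iff.rfl

def removeNth : linearStabilizer q →* AffPair n where
  toFun g := ⟨Fin.removeNth q g.1.v, g.1.p.restrictSuccAbove (mem_linearStabilizer.mp g.2)⟩
  map_one' := by
    refine AffPair.ext rfl (Equiv.ext fun t => q.succAbove_right_injective ?_)
    rw [succAbove_restrictSuccAbove]
    rfl
  map_mul' g h := by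
    refine AffPair.ext (funext fun t => ?_) (Equiv.ext fun t => q.succAbove_right_injective ?_)
    · show g.1.v _ + h.1.v (g.1.p⁻¹ (q.succAbove t)) = g.1.v _ + h.1.v (q.succAbove _)
      rw [succAbove_restrictSuccAbove_inv]
    · dsimp only
      rw [succAbove_restrictSuccAbove, mul_p, mul_apply, Subgroup.coe_mul, mul_p, mul_apply,
        succAbove_restrictSuccAbove, succAbove_restrictSuccAbove]

variable {q}

theorem removeNth_v (g : linearStabilizer q) (t : Fin n) :
    (removeNth q g).v t = g.1.v (q.succAbove t) := rfl

theorem succAbove_removeNth_p (g : linearStabilizer q) (t : Fin n) :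
    q.succAbove ((removeNth q g).p t) = g.1.p (q.succAbove t) :=
  succAbove_restrictSuccAbove _ (mem_linearStabilizer.mp g.2) t

theorem eq_of_removeNth_eq {g h : linearStabilizer q} (hq : g.1.v q = h.1.v q)
    (hgh : removeNth q g = removeNth q h) : g = h := by
  refine Subtype.ext (AffPair.ext (funext fun j => ?_) (Equiv.ext fun j => ?_)) <;>
    rcases q.eq_self_or_eq_succAbove j with rfl | ⟨t, rfl⟩
  · exact hq
  · exact congrFun (congrArg AffPair.v hgh) t
  · exact g.2.trans h.2.symm
  · rw [← succAbove_removeNth_p, ← succAbove_removeNth_p, hgh]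

variable (q)

def insertNth (c : ℤ) (h : AffPair n) : AffPair (n + 1) :=
  ⟨Fin.insertNth q c h.v, h.p.extendDomain (finSuccAboveEquiv q)⟩

theorem insertNth_mem_linearStabilizer (c : ℤ) (h : AffPair n) :
    insertNth q c h ∈ linearStabilizer q :=
  extendDomain_self h.p

theorem removeNth_insertNth (c : ℤ) (h : AffPair n) :
    removeNth q ⟨insertNth q c h, insertNth_mem_linearStabilizer q c h⟩ = h := by
  refine AffPair.ext (Fin.removeNth_insertNth (α := fun _ => ℤ) q c h.v)
    (Equiv.ext fun t => q.succAbove_right_injective ?_)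
  rw [succAbove_removeNth_p]
  exact extendDomain_succAbove h.p t

end AffPair

theorem iotaIdx_eq_succAbove (m : ℕ) : iotaIdx m = (midIdx m).succAbove := by
  funext t
  ext
  simp only [iotaIdx, Fin.succAbove, midIdx, Fin.lt_def, Fin.val_castSucc]
  split_ifs <;> rfl

section IwahoriWeyl

variable {m : ℕ}

theorem mem_WtildeG {g : AffPair (2*m+1)} :
    g ∈ WtildeG m ↔ (∀ j, g.v j + g.v j.rev = 2 * g.v (midIdx m)) ∧ IsStarPerm g.p :=
  Iff.rfl

theorem mem_WtildeGSp {g : AffPair (2*m)} :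
    g ∈ WtildeGSp m ↔ (∀ j l, g.v j + g.v j.rev = g.v l + g.v l.rev) ∧ IsStarPerm g.p :=
  Iff.rfl

theorem WtildeG_le_linearStabilizer : WtildeG m ≤ AffPair.linearStabilizer (midIdx m) :=
  fun _ hg => starPerm_fixes_mid (mem_WtildeG.mp hg).2

theorem removeNth_mem_WtildeGSp (g : AffPair.linearStabilizer (midIdx m)) (hg : g.1 ∈ WtildeG m) :
    AffPair.removeNth (midIdx m) g ∈ WtildeGSp m := by
  obtain ⟨hv, hp⟩ := mem_WtildeG.mp hg
  refine mem_WtildeGSp.mpr ⟨fun j l => ?_, hp.restrictSuccAbove (rev_midIdx m) g.2⟩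
  simp only [AffPair.removeNth_v, Fin.succAbove_rev_of_rev_eq (rev_midIdx m), hv]

theorem insertNth_mem_WtildeG {h : AffPair (2*m)} (hh : h ∈ WtildeGSp m) {c : ℤ}
    (hc : ∀ t, h.v t + h.v t.rev = c + c) : AffPair.insertNth (midIdx m) c h ∈ WtildeG m := by
  refine ⟨fun j => ?_, (mem_WtildeGSp.mp hh).2.extendDomain (rev_midIdx m)⟩
  simp only [AffPair.insertNth, Fin.insertNth_apply_same]
  rcases (midIdx m).eq_self_or_eq_succAbove j with rfl | ⟨t, rfl⟩
  · rw [rev_midIdx, Fin.insertNth_apply_same, two_mul]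
  · rw [← Fin.succAbove_rev_of_rev_eq (rev_midIdx m), Fin.insertNth_apply_succAbove,
      Fin.insertNth_apply_succAbove, hc, two_mul]

variable (m) in
def deleteMid : WtildeG m →* WtildeGSp m :=
  ((AffPair.removeNth (midIdx m)).comp
    (Subgroup.inclusion WtildeG_le_linearStabilizer)).codRestrict (WtildeGSp m)
      fun g => removeNth_mem_WtildeGSp _ g.2

theorem deleteMid_v (g : WtildeG m) (t : Fin (2*m)) :
    (deleteMid m g).1.v t = g.1.v ((midIdx m).succAbove t) := rfl

theorem succAbove_deleteMid_p (g : WtildeG m) (t : Fin (2*m)) :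
    (midIdx m).succAbove ((deleteMid m g).1.p t) = g.1.p ((midIdx m).succAbove t) :=
  AffPair.succAbove_removeNth_p _ t

/-- The similitude factor `y_j + y_{2m+1-j}`, which does not depend on `j`. -/
def similitude (hm : 0 < m) : WtildeGSp m →* Multiplicative ℤ where
  toFun g := .ofAdd (g.1.v ⟨0, by omega⟩ + g.1.v (Fin.rev ⟨0, by omega⟩))
  map_one' := by simp [AffPair.one_v]
  map_mul' g h := by
    obtain ⟨-, hgp⟩ := mem_WtildeGSp.mp g.2
    obtain ⟨hhv, -⟩ := mem_WtildeGSp.mp h.2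
    simp only [Subgroup.coe_mul, AffPair.mul_v, Pi.add_apply, isStarPerm_inv hgp _,
      ← ofAdd_add]
    congr 1
    linarith [hhv (g.1.p⁻¹ ⟨0, by omega⟩) ⟨0, by omega⟩]

theorem toAdd_similitude (hm : 0 < m) (g : WtildeGSp m) (j : Fin (2*m)) :
    (similitude hm g).toAdd = g.1.v j + g.1.v j.rev :=
  (mem_WtildeGSp.mp g.2).1 _ _

theorem toAdd_similitude_deleteMid (hm : 0 < m) (g : WtildeG m) :
    (similitude hm (deleteMid m g)).toAdd = 2 * g.1.v (midIdx m) := by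
  rw [toAdd_similitude hm _ ⟨0, by omega⟩, deleteMid_v, deleteMid_v,
    Fin.succAbove_rev_of_rev_eq (rev_midIdx m), (mem_WtildeG.mp g.2).1]

theorem similitude_surjective (hm : 0 < m) : Function.Surjective (similitude hm) := by
  intro c
  -- the translation by `c` on the first `m` coordinates has similitude factor `c`
  have hc : ∀ j : Fin (2*m), (if (j : ℕ) < m then c.toAdd else 0) +
      (if (j.rev : ℕ) < m then c.toAdd else 0) = c.toAdd := by
    intro j
    have := j.isLt
    simp only [Fin.val_rev]
    split_ifs <;> omega
  refine ⟨⟨⟨fun j => if (j : ℕ) < m then c.toAdd else 0, 1⟩,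
    fun j l => (hc j).trans (hc l).symm, fun _ => rfl⟩, ?_⟩
  exact (toAdd_similitude hm _ ⟨0, by omega⟩).trans (hc _)

theorem deleteMid_injective (hm : 0 < m) : Function.Injective (deleteMid m) := by
  intro g h hgh
  have hmid : g.1.v (midIdx m) = h.1.v (midIdx m) := by
    have := congrArg (fun x => (similitude hm x).toAdd) hgh
    simp only [toAdd_similitude_deleteMid] at this
    omega
  exact Subgroup.inclusion_injective WtildeG_le_linearStabilizer
    (AffPair.eq_of_removeNth_eq hmid (congrArg Subtype.val hgh))

theorem mem_range_deleteMid_iff (hm : 0 < m) {h : WtildeGSp m} :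
    h ∈ (deleteMid m).range ↔ Even (similitude hm h).toAdd := by
  constructor
  · rintro ⟨g, rfl⟩
    rw [toAdd_similitude_deleteMid]
    exact even_two_mul _
  · rintro ⟨c, hc⟩
    have hmem := insertNth_mem_WtildeG h.2 fun t => (toAdd_similitude hm h t).symm.trans hc
    exact ⟨⟨_, hmem⟩, Subtype.ext (AffPair.removeNth_insertNth _ c h.1)⟩

theorem index_range_deleteMid (hm : 0 < m) : (deleteMid m).range.index = 2 := by
  set parity := (Int.castAddHom (ZMod 2)).toMultiplicative.comp (similitude hm)
  have hker : (deleteMid m).range = parity.ker := by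
    ext h
    rw [mem_range_deleteMid_iff hm, MonoidHom.mem_ker, ← ZMod.intCast_eq_zero_iff_even]
    rfl
  have hsurj : Function.Surjective parity :=
    (ZMod.intCast_surjective (n := 2)).comp (similitude_surjective hm)
  rw [hker, Subgroup.index_ker, MonoidHom.range_eq_top.mpr hsurj, Subgroup.card_top,
    Nat.card_eq_fintype_card]
  rfl

end IwahoriWeyl

/-- The map deleting the middle coordinate on translation parts, together
with the natural isomorphism S_n^* ≅ S_{2m}^* (restriction along `iotaIdx`), defines an
injective group homomorphism W̃_G → W̃_{GSp} whose image has index 2 (n = 2m+1). -/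
theorem stmt_19 (m : ℕ) (hm : 0 < m) :
    ∃ f : WtildeG m →* WtildeGSp m,
      Function.Injective f ∧
      (∀ g : WtildeG m, ∀ t : Fin (2*m),
        ((f g : AffPair (2*m)).v t = (g : AffPair (2*m+1)).v (iotaIdx m t)) ∧
        (iotaIdx m ((f g : AffPair (2*m)).p t) = (g : AffPair (2*m+1)).p (iotaIdx m t))) ∧
      f.range.index = 2 := by
  refine ⟨deleteMid m, deleteMid_injective hm, fun g t => ?_, index_range_deleteMid hm⟩
  rw [iotaIdx_eq_succAbove]
  exact ⟨deleteMid_v g t, succAbove_deleteMid_p g t⟩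
end
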